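/- arXiv:2108.10162 — 12 statements merged into one kernel-verified Lean document; each statement's English description precedes it below -/
import Mathlib

section
/- Let μ be a nonzero finite positive measure on a set Ω and let (f_n) be a uniformly bounded sequence in L^∞(μ), viewed as a sequence in L^1(μ). If every subsequence of (f_n) has a constant function as an L^1-norm limit point, then for all disjoint compact sets A, B ⊆ ℂ one has lim_{n→∞} μ(f_n^{-1}(A)) · μ(f_n^{-1}(B)) = 0. -/
/-!
Pass to a subsequence along which `f n → c` in `L¹` for a constant `c`. Since `A` and `B` are
disjoint compact sets, `c` stays a fixed distance `δ > 0` away from one of them, say `A`, and by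
Markov's inequality `μ(f n ⁻¹ A) ≤ δ⁻¹ ‖f n - c‖₁ → 0` along the subsequence; the other factor is
at most `μ Ω`. As every subsequence has such a further subsequence, the whole sequence of products
tends to `0`.
-/

open MeasureTheory Filter Set Topology

theorem Filter.tendsto_of_forall_strictMono_exists_subseq_tendsto {α : Type*} {x : ℕ → α}
    {l : Filter α}
    (h : ∀ φ : ℕ → ℕ, StrictMono φ → ∃ ψ : ℕ → ℕ, Tendsto (fun k => x (φ (ψ k))) atTop l) :
    Tendsto x atTop l := by
  refine tendsto_of_subseq_tendsto fun ns hns => ?_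
  obtain ⟨φ, -, hnsφ⟩ := strictMono_subseq_of_tendsto_atTop hns
  obtain ⟨ψ, hψ⟩ := h (ns ∘ φ) hnsφ
  exact ⟨φ ∘ ψ, hψ⟩

theorem Disjoint.exists_pos_forall_le_dist_or {X : Type*} [PseudoMetricSpace X] {A B : Set X}
    (hAB : Disjoint A B) (hA : IsCompact A) (hB : IsClosed B) :
    ∃ δ > 0, ∀ c : X, (∀ a ∈ A, δ ≤ dist a c) ∨ (∀ b ∈ B, δ ≤ dist b c) := by
  obtain ⟨δ, hδ, hdisj⟩ := hAB.exists_thickenings hA hB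
  refine ⟨δ, hδ, fun c => ?_⟩
  by_contra! ⟨⟨a, ha, hac⟩, ⟨b, hb, hbc⟩⟩
  rw [dist_comm] at hac hbc
  exact disjoint_left.1 hdisj (Metric.mem_thickening_iff.2 ⟨a, ha, hac⟩)
    (Metric.mem_thickening_iff.2 ⟨b, hb, hbc⟩)

namespace MeasureTheory

variable {Ω ι : Type*} [MeasurableSpace Ω] {μ : Measure Ω} [IsFiniteMeasure μ]

theorem isBoundedUnder_norm_measureReal (l : Filter ι) (s : ι → Set Ω) :
    IsBoundedUnder (· ≤ ·) l (fun i => ‖μ.real (s i)‖) :=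
  isBoundedUnder_of ⟨μ.real univ, fun i => by
    rw [Real.norm_of_nonneg measureReal_nonneg]
    exact measureReal_mono (subset_univ _)⟩

theorem tendsto_measureReal_preimage_of_tendsto_integral_norm_sub {E : Type*}
    [NormedAddCommGroup E] {l : Filter ι} {g : ι → Ω → E} (hg : ∀ i, Integrable (g i) μ) {c : E}
    (hgc : Tendsto (fun i => ∫ x, ‖g i x - c‖ ∂μ) l (𝓝 0)) {S : Set E} {r : ℝ} (hr : 0 < r)
    (hS : ∀ a ∈ S, r ≤ dist a c) :
    Tendsto (fun i => μ.real (g i ⁻¹' S)) l (𝓝 0) := by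
  have hbound : ∀ i, μ.real (g i ⁻¹' S) ≤ r⁻¹ * ∫ x, ‖g i x - c‖ ∂μ := fun i =>
    calc μ.real (g i ⁻¹' S) ≤ μ.real {x | r ≤ ‖g i x - c‖} :=
          measureReal_mono fun x hx => (hS _ hx).trans_eq (dist_eq_norm _ _)
      _ ≤ r⁻¹ * ∫ x, ‖g i x - c‖ ∂μ := by
          rw [le_inv_mul_iff₀ hr]
          exact mul_meas_ge_le_integral_of_nonneg (ae_of_all _ fun _ => norm_nonneg _)
            ((hg i).sub (integrable_const c)).norm r
  refine squeeze_zero (fun _ => measureReal_nonneg) hbound ?_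
  simpa using hgc.const_mul r⁻¹

end MeasureTheory

theorem stmt0_general {Ω : Type*} [MeasurableSpace Ω] (μ : Measure Ω) [IsFiniteMeasure μ]
    (f : ℕ → Ω → ℂ) (hmeas : ∀ n, Measurable (f n))
    (C : ℝ) (hbd : ∀ n x, ‖f n x‖ ≤ C)
    (hconst : ∀ φ : ℕ → ℕ, StrictMono φ →
      ∃ c : ℂ, ∃ ψ : ℕ → ℕ, StrictMono ψ ∧
        Tendsto (fun k => ∫ x, ‖f (φ (ψ k)) x - c‖ ∂μ) atTop (nhds 0)) :
    ∀ A B : Set ℂ, IsCompact A → IsCompact B → Disjoint A B →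
      Tendsto (fun n => (μ (f n ⁻¹' A)).toReal * (μ (f n ⁻¹' B)).toReal)
        atTop (nhds 0) := by
  intro A B hA hB hAB
  obtain ⟨δ, hδ, hsep⟩ := hAB.exists_pos_forall_le_dist_or hA hB.isClosed
  have hint : ∀ n, Integrable (f n) μ := fun n =>
    .of_bound (hmeas n).aestronglyMeasurable C (ae_of_all _ (hbd n))
  refine tendsto_of_forall_strictMono_exists_subseq_tendsto fun φ hφ => ?_
  obtain ⟨c, ψ, -, hc⟩ := hconst φ hφ
  have hmarkov {S : Set ℂ} (hS : ∀ a ∈ S, δ ≤ dist a c) :=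
    tendsto_measureReal_preimage_of_tendsto_integral_norm_sub (fun _ => hint _) hc hδ hS
  refine ⟨ψ, ?_⟩
  rcases hsep c with hAc | hBc
  · exact (hmarkov hAc).zero_mul_isBoundedUnder_le (isBoundedUnder_norm_measureReal _ _)
  · exact isBoundedUnder_le_mul_tendsto_zero (isBoundedUnder_norm_measureReal _ _) (hmarkov hBc)

/-- If every subsequence of a uniformly bounded sequence `(f n)` in `L^∞(μ)` has a constant
function as an `L¹(μ)`-norm limit point, then for all disjoint compact sets `A, B ⊆ ℂ` the
product `μ(f n ⁻¹ A) · μ(f n ⁻¹ B)` tends to `0`. -/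
theorem stmt0 {Ω : Type*} [MeasurableSpace Ω] (μ : Measure Ω) [IsFiniteMeasure μ]
    (hμ : μ ≠ 0) (f : ℕ → Ω → ℂ) (hmeas : ∀ n, Measurable (f n))
    (C : ℝ) (hbd : ∀ n x, ‖f n x‖ ≤ C)
    (hconst : ∀ φ : ℕ → ℕ, StrictMono φ →
      ∃ c : ℂ, ∃ ψ : ℕ → ℕ, StrictMono ψ ∧
        Tendsto (fun k => ∫ x, ‖f (φ (ψ k)) x - c‖ ∂μ) atTop (nhds 0)) :
    ∀ A B : Set ℂ, IsCompact A → IsCompact B → Disjoint A B →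
      Tendsto (fun n => (μ (f n ⁻¹' A)).toReal * (μ (f n ⁻¹' B)).toReal)
        atTop (nhds 0) :=
  stmt0_general μ f hmeas C hbd hconst
end

section
/- Let μ be a nonzero finite positive measure on Ω and (f_n) a uniformly bounded sequence in L^∞(μ). If for all disjoint compact sets A, B ⊆ ℂ one has lim_{n→∞} μ(f_n^{-1}(A)) · μ(f_n^{-1}(B)) = 0, then every subsequence of (f_n) has a subsequence converging in L^1(μ) norm to a constant function. -/
/-!
Cover the compact range of the `f n` by finitely many balls of radius `ε / 2`. One of them,
say around `c`, carries at least a fixed fraction of the mass of `μ`; its preimage and the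
preimage of the compact set of points at distance `≥ ε` from `c` have vanishing product of
measures, so for large `n` the function `f n` lies within `ε` of the constant `c` outside a set
of small measure. A diagonal extraction, together with the compactness of the range for the
constants, yields a subsequence converging in measure to a constant, and bounded convergence
upgrades this to convergence in `L¹`.
-/

open MeasureTheory Filter Set
open Metric Topology Finset

section

variable {Ω E : Type*} [MeasurableSpace Ω] {μ : Measure Ω} [IsFiniteMeasure μ]

theorem eventually_exists_measureReal_dist_ge_lt [PseudoMetricSpace E] [NeZero μ] {ι : Type*}
    {l : Filter ι} {K : Set E} (hK : IsCompact K) {f : ι → Ω → E} (hfK : ∀ i x, f i x ∈ K)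
    (hprod : ∀ A B : Set E, IsCompact A → IsCompact B → Disjoint A B →
      Tendsto (fun i => μ.real (f i ⁻¹' A) * μ.real (f i ⁻¹' B)) l (𝓝 0))
    {ε δ : ℝ} (hε : 0 < ε) (hδ : 0 < δ) :
    ∀ᶠ i in l, ∃ c ∈ K, μ.real {x | ε ≤ dist (f i x) c} < δ := by
  obtain ⟨t, htK, hKt⟩ :=
    hK.elim_nhds_subcover (fun y => ball y (ε / 2)) fun y _ => ball_mem_nhds y (half_pos hε)
  set near : E → Set E := fun y => K ∩ closedBall y (ε / 2)
  set far : E → Set E := fun y => K ∩ {z | ε ≤ dist z y}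
  have hsmall : ∀ᶠ i in l, ∀ y ∈ t,
      #t * (μ.real (f i ⁻¹' near y) * μ.real (f i ⁻¹' far y)) < μ.real univ * δ := by
    refine (eventually_all_finset t).2 fun y _ => ?_
    have hdisj : Disjoint (near y) (far y) := by
      rw [Set.disjoint_left]
      rintro z ⟨-, hz⟩ ⟨-, hz'⟩
      rw [mem_closedBall] at hz
      rw [mem_ofPred_eq] at hz'
      linarith
    have hnear : IsCompact (near y) := hK.inter_right isClosed_closedBall
    have hfar : IsCompact (far y) :=
      hK.inter_right (isClosed_le continuous_const (continuous_id.dist continuous_const))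
    refine ((hprod _ _ hnear hfar hdisj).const_mul (#t : ℝ)).eventually_lt_const ?_
    rw [mul_zero]
    exact mul_pos measureReal_univ_pos hδ
  filter_upwards [hsmall] with i hi
  have hcover : μ.real univ ≤ ∑ y ∈ t, μ.real (f i ⁻¹' near y) := by
    refine (measureReal_mono (fun x _ => ?_) (measure_ne_top _ _)).trans
      (measureReal_biUnion_finset_le _ _)
    obtain ⟨y, hy, hxy⟩ := mem_iUnion₂.mp (hKt (hfK i x))
    exact mem_iUnion₂.mpr ⟨y, hy, hfK i x, ball_subset_closedBall hxy⟩
  have ht : t.Nonempty := nonempty_of_sum_ne_zero (measureReal_univ_pos.trans_le hcover).ne'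
  obtain ⟨y, hy, hmax⟩ := t.exists_max_image (fun y => μ.real (f i ⁻¹' near y)) ht
  have hnear : μ.real univ ≤ #t * μ.real (f i ⁻¹' near y) := by
    simpa using hcover.trans (sum_le_card_nsmul _ _ _ hmax)
  have hfar : μ.real (f i ⁻¹' far y) < δ := by
    refine lt_of_mul_lt_mul_left (a := μ.real univ) ?_ measureReal_nonneg
    calc μ.real univ * μ.real (f i ⁻¹' far y)
        ≤ #t * μ.real (f i ⁻¹' near y) * μ.real (f i ⁻¹' far y) :=
          mul_le_mul_of_nonneg_right hnear measureReal_nonneg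
      _ < μ.real univ * δ := by rw [mul_assoc]; exact hi y hy
  refine ⟨y, htK y hy, (measureReal_mono ?_).trans_lt hfar⟩
  exact fun x hx => ⟨hfK i x, hx⟩

theorem tendstoInMeasure_const_of_measureReal_dist_ge_le [PseudoMetricSpace E] {ι : Type*}
    {l : Filter ι} {g : ι → Ω → E} {c : ι → E} {L : E} {r : ι → ℝ}
    (hc : Tendsto c l (𝓝 L)) (hr : Tendsto r l (𝓝 0))
    (hg : ∀ i, μ.real {x | r i ≤ dist (g i x) (c i)} ≤ r i) :
    TendstoInMeasure μ g l (fun _ => L) := by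
  rw [tendstoInMeasure_iff_measureReal_dist]
  intro ε hε
  have hcL : ∀ᶠ i in l, dist (c i) L < ε / 2 := tendsto_nhds.mp hc _ (half_pos hε)
  have hrε : ∀ᶠ i in l, r i < ε / 2 := hr.eventually_lt_const (half_pos hε)
  refine squeeze_zero' (Eventually.of_forall fun _ => measureReal_nonneg) ?_ hr
  filter_upwards [hcL, hrε] with i hci hri
  refine (measureReal_mono fun x hx => ?_).trans (hg i)
  have := dist_triangle (g i x) (c i) L
  rw [mem_ofPred_eq] at hx ⊢
  linarith

theorem exists_subseq_tendstoInMeasure_const [PseudoMetricSpace E] {K : Set E}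
    (hK : IsCompact K) {f : ℕ → Ω → E}
    (h : ∀ ε > 0, ∀ δ > 0, ∀ᶠ n in atTop, ∃ c ∈ K, μ.real {x | ε ≤ dist (f n x) c} < δ) :
    ∃ c ∈ K, ∃ ψ : ℕ → ℕ, StrictMono ψ ∧
      TendstoInMeasure μ (fun k => f (ψ k)) atTop (fun _ => c) := by
  set r : ℕ → ℝ := fun k => 1 / (k + 1)
  have hr : ∀ k, 0 < r k := fun k => Nat.one_div_pos_of_nat
  obtain ⟨θ, hθ, hθc⟩ := extraction_forall_of_eventually fun k => h (r k) (hr k) (r k) (hr k)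
  choose c hcK hc using hθc
  obtain ⟨L, hL, σ, hσ, hcσ⟩ := hK.tendsto_subseq hcK
  have hrσ : Tendsto (r ∘ σ) atTop (𝓝 0) :=
    tendsto_one_div_add_atTop_nhds_zero_nat.comp hσ.tendsto_atTop
  exact ⟨L, hL, θ ∘ σ, hθ.comp hσ,
    tendstoInMeasure_const_of_measureReal_dist_ge_le hcσ hrσ fun k => (hc (σ k)).le⟩

theorem tendsto_integral_norm_sub_of_tendstoInMeasure [NormedAddCommGroup E]
    {g : ℕ → Ω → E} {h : Ω → E} {R : ℝ} (hg : ∀ n, AEStronglyMeasurable (g n) μ)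
    (hbd : ∀ n, ∀ᵐ x ∂μ, ‖g n x - h x‖ ≤ R) (hgh : TendstoInMeasure μ g atTop h) :
    Tendsto (fun n => ∫ x, ‖g n x - h x‖ ∂μ) atTop (𝓝 0) := by
  have hh := hgh.aestronglyMeasurable hg
  refine tendsto_of_subseq_tendsto fun ns hns => ?_
  obtain ⟨ms, -, hms⟩ := (hgh.comp hns).exists_seq_tendsto_ae
  refine ⟨ms, ?_⟩
  have hlim : ∀ᵐ x ∂μ, Tendsto (fun k => ‖g (ns (ms k)) x - h x‖) atTop (𝓝 0) := by
    filter_upwards [hms] with x hx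
    simpa [dist_eq_norm] using tendsto_iff_dist_tendsto_zero.mp hx
  simpa using tendsto_integral_of_dominated_convergence (fun _ => R)
    (fun _ => ((hg _).sub hh).norm) (integrable_const R) (fun _ => by simpa using hbd _) hlim

end

/-- If for all disjoint compact sets `A, B ⊆ ℂ` the product `μ(f n ⁻¹ A) · μ(f n ⁻¹ B)` tends
to `0`, then every subsequence of the uniformly bounded sequence `(f n)` has a further
subsequence converging in `L¹(μ)` norm to a constant function. -/
theorem stmt1 {Ω : Type*} [MeasurableSpace Ω] (μ : Measure Ω) [IsFiniteMeasure μ]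
    (hμ : μ ≠ 0) (f : ℕ → Ω → ℂ) (hmeas : ∀ n, Measurable (f n))
    (C : ℝ) (hbd : ∀ n x, ‖f n x‖ ≤ C)
    (hprod : ∀ A B : Set ℂ, IsCompact A → IsCompact B → Disjoint A B →
      Tendsto (fun n => (μ (f n ⁻¹' A)).toReal * (μ (f n ⁻¹' B)).toReal)
        atTop (nhds 0)) :
    ∀ φ : ℕ → ℕ, StrictMono φ →
      ∃ c : ℂ, ∃ ψ : ℕ → ℕ, StrictMono ψ ∧
        Tendsto (fun k => ∫ x, ‖f (φ (ψ k)) x - c‖ ∂μ) atTop (nhds 0) := by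
  intro φ hφ
  have : NeZero μ := ⟨hμ⟩
  have hK : IsCompact (closedBall (0 : ℂ) C) := isCompact_closedBall 0 C
  have hfK : ∀ n x, f n x ∈ closedBall (0 : ℂ) C := fun n x =>
    mem_closedBall_zero_iff.mpr (hbd n x)
  have hconc : ∀ ε > 0, ∀ δ > 0, ∀ᶠ k in atTop,
      ∃ c ∈ closedBall (0 : ℂ) C, μ.real {x | ε ≤ dist (f (φ k) x) c} < δ := fun ε hε δ hδ =>
    hφ.tendsto_atTop.eventually (eventually_exists_measureReal_dist_ge_lt hK hfK hprod hε hδ)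
  obtain ⟨c, -, ψ, hψ, hconv⟩ := exists_subseq_tendstoInMeasure_const hK hconc
  refine ⟨c, ψ, hψ, tendsto_integral_norm_sub_of_tendstoInMeasure (R := C + ‖c‖)
    (fun _ => (hmeas _).aestronglyMeasurable) (fun _ => ?_) hconv⟩
  exact Eventually.of_forall fun x => (norm_sub_le _ _).trans (by gcongr; exact hbd _ x)
end

section
/- Let μ be a nonzero finite positive measure on Ω, let K ⊆ ℂ be compact, and let (f_n) be measurable functions with values in K. Then for every δ > 0 there exist a closed set J ⊆ K with diameter at most δ and a subsequence (f_{n_k}) such that lim_{k→∞} μ(f_{n_k}^{-1}(J)) = μ(Ω), provided that for all disjoint compact sets A, B ⊆ ℂ one has lim_{n→∞} μ(f_n^{-1}(A)) · μ(f_n^{-1}(B)) = 0. -/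
/-!
Cover `K` by finitely many closed balls `A` of radius `δ / 4`. Since the `f n` take values in `K`,
the masses `μ (f n ⁻¹' A)` add up to at least `μ Ω > 0`, so for one of these balls the mass does
not tend to `0`; along a subsequence it stays above some `ε > 0`. For the compact set `B` of points
of `K` at distance at least `δ / 2` from the centre of that ball, the product condition then forces
`μ (f n ⁻¹' B) → 0` along the subsequence, so `J = K ∩ closedBall c (δ / 2)` carries asymptotically
all the mass.
-/

open MeasureTheory Filter Set Topology Metric

lemma exists_subseq_tendsto_zero_of_tendsto_mul {𝕜 : Type*} [NormedDivisionRing 𝕜]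
    {a b : ℕ → 𝕜} (ha : ¬Tendsto a atTop (𝓝 0)) (hab : Tendsto (a * b) atTop (𝓝 0)) :
    ∃ φ : ℕ → ℕ, StrictMono φ ∧ Tendsto (b ∘ φ) atTop (𝓝 0) := by
  obtain ⟨ε, hε, hfreq⟩ : ∃ ε > 0, ∃ᶠ n in atTop, ε ≤ ‖a n‖ := by
    simpa [Metric.tendsto_nhds, Filter.not_eventually, frequently_atTop] using ha
  obtain ⟨φ, hφ, hεφ⟩ := extraction_of_frequently_atTop hfreq
  refine ⟨φ, hφ, Asymptotics.IsBigO.trans_tendsto ?_ (hab.comp hφ.tendsto_atTop)⟩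
  refine Asymptotics.IsBigO.of_bound ε⁻¹ (Eventually.of_forall fun k => ?_)
  rw [Function.comp_apply, Function.comp_apply, Pi.mul_apply, norm_mul,
    le_inv_mul_iff₀ hε]
  exact mul_le_mul_of_nonneg_right (hεφ k) (norm_nonneg _)

section Measure

variable {Ω : Type*} [MeasurableSpace Ω] (μ : Measure Ω) [IsFiniteMeasure μ]

lemma exists_not_tendsto_measureReal_zero_of_iUnion_eq_univ [NeZero μ] {ι : Type*}
    (t : Finset ι) (s : ι → ℕ → Set Ω) (hcover : ∀ n, ⋃ i ∈ t, s i n = univ) :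
    ∃ i ∈ t, ¬Tendsto (fun n => μ.real (s i n)) atTop (𝓝 0) := by
  by_contra! h
  have hsum : Tendsto (fun n => ∑ i ∈ t, μ.real (s i n)) atTop (𝓝 0) := by
    simpa using tendsto_finsetSum t h
  have hle : ∀ n, μ.real univ ≤ ∑ i ∈ t, μ.real (s i n) := fun n =>
    hcover n ▸ measureReal_biUnion_finset_le t _
  exact (measureReal_univ_pos (μ := μ)).not_ge (ge_of_tendsto' hsum hle)

lemma tendsto_measure_univ_of_union_eq_univ {ι : Type*} {l : Filter ι} {s t : ι → Set Ω}
    (hst : ∀ i, s i ∪ t i = univ) (ht : Tendsto (fun i => μ (t i)) l (𝓝 0)) :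
    Tendsto (fun i => μ (s i)) l (𝓝 (μ univ)) := by
  have hlower : ∀ i, μ univ - μ (t i) ≤ μ (s i) := fun i =>
    tsub_le_iff_right.2 (hst i ▸ measure_union_le _ _)
  have hlim : Tendsto (fun i => μ univ - μ (t i)) l (𝓝 (μ univ)) := by
    simpa using ENNReal.Tendsto.sub tendsto_const_nhds ht (Or.inl (measure_ne_top μ univ))
  exact tendsto_of_tendsto_of_tendsto_of_le_of_le hlim tendsto_const_nhds hlower
    (fun i => measure_mono (subset_univ _))

end Measure

theorem stmt2_general {Ω : Type*} [MeasurableSpace Ω] (μ : Measure Ω) [IsFiniteMeasure μ]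
    (hμ : μ ≠ 0) (K : Set ℂ) (hK : IsCompact K)
    (f : ℕ → Ω → ℂ)
    (hrange : ∀ n x, f n x ∈ K)
    (hprod : ∀ A B : Set ℂ, IsCompact A → IsCompact B → Disjoint A B →
      Tendsto (fun n => (μ (f n ⁻¹' A)).toReal * (μ (f n ⁻¹' B)).toReal)
        atTop (nhds 0)) :
    ∀ δ > (0:ℝ), ∃ J ⊆ K, IsClosed J ∧ Metric.diam J ≤ δ ∧
      ∃ φ : ℕ → ℕ, StrictMono φ ∧
        Tendsto (fun k => μ (f (φ k) ⁻¹' J)) atTop (nhds (μ univ)) := by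
  intro δ hδ
  have : NeZero μ := ⟨hμ⟩
  obtain ⟨t, -, hKt⟩ := hK.elim_nhds_subcover (fun c => closedBall c (δ / 4))
    (fun c _ => closedBall_mem_nhds c (by positivity))
  obtain ⟨c, -, hc⟩ := exists_not_tendsto_measureReal_zero_of_iUnion_eq_univ μ t
    (fun c n => f n ⁻¹' closedBall c (δ / 4)) fun n =>
      eq_univ_of_forall fun ω => by simpa using hKt (hrange n ω)
  let B := K \ ball c (δ / 2)
  have hdisj : Disjoint (closedBall c (δ / 4)) B :=
    disjoint_sdiff_right.mono_left (closedBall_subset_ball (by linarith))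
  obtain ⟨φ, hφ, hB⟩ := exists_subseq_tendsto_zero_of_tendsto_mul hc
    (hprod _ B (isCompact_closedBall c _) (hK.diff isOpen_ball) hdisj)
  refine ⟨K ∩ closedBall c (δ / 2), inter_subset_left, hK.isClosed.inter isClosed_closedBall,
    ?_, φ, hφ, tendsto_measure_univ_of_union_eq_univ μ (t := fun k => f (φ k) ⁻¹' B) ?_ ?_⟩
  · calc diam (K ∩ closedBall c (δ / 2)) ≤ diam (closedBall c (δ / 2)) :=
          diam_mono inter_subset_right isBounded_closedBall
      _ ≤ δ := by linarith [diam_closedBall (x := c) (by positivity : 0 ≤ δ / 2)]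
  · refine fun k => eq_univ_of_forall fun ω => ?_
    by_cases h : f (φ k) ω ∈ closedBall c (δ / 2)
    · exact Or.inl ⟨hrange _ ω, h⟩
    · exact Or.inr ⟨hrange _ ω, fun hb => h (ball_subset_closedBall hb)⟩
  · simpa using (ENNReal.tendsto_toReal_iff (fun _ => measure_ne_top μ _)
      ENNReal.zero_ne_top).1 (by simpa [Function.comp_def] using hB)

/-- For a sequence of measurable functions with values in a compact set `K ⊆ ℂ` satisfying the
product condition, for every `δ > 0` there is a closed set `J ⊆ K` of diameter at most `δ` and
a subsequence along which `μ(f n ⁻¹ J)` tends to `μ(Ω)`. -/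
theorem stmt2 {Ω : Type*} [MeasurableSpace Ω] (μ : Measure Ω) [IsFiniteMeasure μ]
    (hμ : μ ≠ 0) (K : Set ℂ) (hK : IsCompact K)
    (f : ℕ → Ω → ℂ) (hmeas : ∀ n, Measurable (f n))
    (hrange : ∀ n x, f n x ∈ K)
    (hprod : ∀ A B : Set ℂ, IsCompact A → IsCompact B → Disjoint A B →
      Tendsto (fun n => (μ (f n ⁻¹' A)).toReal * (μ (f n ⁻¹' B)).toReal)
        atTop (nhds 0)) :
    ∀ δ > (0:ℝ), ∃ J ⊆ K, IsClosed J ∧ Metric.diam J ≤ δ ∧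
      ∃ φ : ℕ → ℕ, StrictMono φ ∧
        Tendsto (fun k => μ (f (φ k) ⁻¹' J)) atTop (nhds (μ univ)) :=
  stmt2_general μ hμ K hK f hrange hprod
end

section
/- Let h₁, h₂, h₃ : (0,t) → ℝ be measurable with h₁, h₂ ≥ 0 and |h₃| ≤ √(h₁h₂) a.e., and let K₁, K₂ ⊆ (0,t) be disjoint measurable sets, K = K₁ ∪ K₂. If h₃ ≥ 0 a.e. on K₁ and h₃ ≤ 0 a.e. on K₂, then ∫_K h₁ · ∫_K h₂ − (∫_K h₃)² ≥ ∫_{K₁}h₁ · ∫_{K₂}h₂ + ∫_{K₂}h₁ · ∫_{K₁}h₂. -/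
open MeasureTheory Set

lemma amgm_aux (a b l : ℝ) (ha : 0 ≤ a) (hb : 0 ≤ b) :
    2 * l * Real.sqrt (a * b) ≤ l ^ 2 * a + b := by
  have h1 : Real.sqrt a * Real.sqrt a = a := Real.mul_self_sqrt ha
  have h2 : Real.sqrt b * Real.sqrt b = b := Real.mul_self_sqrt hb
  have key := sq_nonneg (l * Real.sqrt a - Real.sqrt b)
  have expand : (l * Real.sqrt a - Real.sqrt b) ^ 2
      = l ^ 2 * a + b - 2 * l * (Real.sqrt a * Real.sqrt b) := by
    linear_combination l ^ 2 * h1 + h2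
  rw [Real.sqrt_mul ha]
  linarith

/-- Cauchy–Schwarz-type bound: if `|f₃| ≤ √(f₁ f₂)` a.e. with `f₁, f₂ ≥ 0` a.e.,
then `(∫ f₃)² ≤ (∫ f₁) (∫ f₂)`. -/
lemma key_cs {μ : Measure ℝ} (f₁ f₂ f₃ : ℝ → ℝ)
    (hi₁ : Integrable f₁ μ) (hi₂ : Integrable f₂ μ) (hi₃ : Integrable f₃ μ)
    (hae : ∀ᵐ x ∂μ, 0 ≤ f₁ x ∧ 0 ≤ f₂ x ∧ |f₃ x| ≤ Real.sqrt (f₁ x * f₂ x)) :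
    (∫ x, f₃ x ∂μ) ^ 2 ≤ (∫ x, f₁ x ∂μ) * (∫ x, f₂ x ∂μ) := by
  set g : ℝ → ℝ := fun x => Real.sqrt (f₁ x * f₂ x) with hg
  have hgmeas : AEStronglyMeasurable g μ :=
    (Real.continuous_sqrt.comp_aestronglyMeasurable (hi₁.1.mul hi₂.1))
  have hgint : Integrable g μ := by
    refine Integrable.mono' ((hi₁.add hi₂).div_const 2) hgmeas ?_
    filter_upwards [hae] with x ⟨h1, h2, _⟩
    rw [Real.norm_of_nonneg (Real.sqrt_nonneg _)]
    have := amgm_aux (f₁ x) (f₂ x) 1 h1 h2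
    show Real.sqrt (f₁ x * f₂ x) ≤ (f₁ x + f₂ x) / 2
    linarith
  set A := ∫ x, f₁ x ∂μ with hA
  set B := ∫ x, f₂ x ∂μ with hB
  set C := ∫ x, g x ∂μ with hC
  have hA0 : 0 ≤ A := integral_nonneg_of_ae (by filter_upwards [hae] with x hx using hx.1)
  have hB0 : 0 ≤ B := integral_nonneg_of_ae (by filter_upwards [hae] with x hx using hx.2.1)
  have hC0 : 0 ≤ C := integral_nonneg_of_ae
    (Filter.Eventually.of_forall fun x => Real.sqrt_nonneg _)
  have habs : |∫ x, f₃ x ∂μ| ≤ C := by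
    calc |∫ x, f₃ x ∂μ| = ‖∫ x, f₃ x ∂μ‖ := (Real.norm_eq_abs _).symm
      _ ≤ ∫ x, ‖f₃ x‖ ∂μ := norm_integral_le_integral_norm _
      _ ≤ C := by
          refine integral_mono_ae hi₃.norm hgint ?_
          filter_upwards [hae] with x hx
          simpa [Real.norm_eq_abs] using hx.2.2
  have hineq : ∀ l : ℝ, 0 ≤ A * (l * l) + (-(2 * C)) * l + B := by
    intro l
    have h1 : ∫ x, (2 * l) * g x ∂μ ≤ ∫ x, (l ^ 2 * f₁ x + f₂ x) ∂μ := by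
      refine integral_mono_ae (hgint.const_mul _) ((hi₁.const_mul _).add hi₂) ?_
      filter_upwards [hae] with x ⟨h1, h2, _⟩
      exact amgm_aux _ _ l h1 h2
    rw [integral_const_mul, integral_add (hi₁.const_mul _) hi₂, integral_const_mul] at h1
    nlinarith [h1]
  have hd := discrim_le_zero hineq
  rw [discrim] at hd
  have hCsq : C ^ 2 ≤ A * B := by nlinarith [hd]
  calc (∫ x, f₃ x ∂μ) ^ 2 = |∫ x, f₃ x ∂μ| ^ 2 := (sq_abs _).symm
    _ ≤ C ^ 2 := by nlinarith [abs_nonneg (∫ x, f₃ x ∂μ)]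
    _ ≤ A * B := hCsq

/-- Lower bound for `∫_K h₁ · ∫_K h₂ − (∫_K h₃)²` when `h₃ ≥ 0` a.e. on `K₁` and
`h₃ ≤ 0` a.e. on `K₂`, where `K = K₁ ∪ K₂` with `K₁, K₂` disjoint. -/
theorem stmt6 (t : ℝ) (ht : 0 < t) (h₁ h₂ h₃ : ℝ → ℝ)
    (hi₁ : IntegrableOn h₁ (Ioo 0 t)) (hi₂ : IntegrableOn h₂ (Ioo 0 t))
    (hi₃ : IntegrableOn h₃ (Ioo 0 t))
    (hae : ∀ᵐ x ∂(volume.restrict (Ioo 0 t)),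
      0 ≤ h₁ x ∧ 0 ≤ h₂ x ∧ |h₃ x| ≤ Real.sqrt (h₁ x * h₂ x))
    (K₁ K₂ : Set ℝ) (hK₁ : MeasurableSet K₁) (hK₂ : MeasurableSet K₂)
    (hsub₁ : K₁ ⊆ Ioo 0 t) (hsub₂ : K₂ ⊆ Ioo 0 t) (hdisj : Disjoint K₁ K₂)
    (hsgn₁ : ∀ᵐ x ∂(volume.restrict K₁), 0 ≤ h₃ x)
    (hsgn₂ : ∀ᵐ x ∂(volume.restrict K₂), h₃ x ≤ 0) :
    (∫ x in K₁, h₁ x) * (∫ x in K₂, h₂ x) + (∫ x in K₂, h₁ x) * (∫ x in K₁, h₂ x) ≤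
      (∫ x in K₁ ∪ K₂, h₁ x) * (∫ x in K₁ ∪ K₂, h₂ x) -
        (∫ x in K₁ ∪ K₂, h₃ x) ^ 2 := by
  have hae₁ : ∀ᵐ x ∂(volume.restrict K₁),
      0 ≤ h₁ x ∧ 0 ≤ h₂ x ∧ |h₃ x| ≤ Real.sqrt (h₁ x * h₂ x) :=
    ae_mono (Measure.restrict_mono hsub₁ le_rfl) hae
  have hae₂ : ∀ᵐ x ∂(volume.restrict K₂),
      0 ≤ h₁ x ∧ 0 ≤ h₂ x ∧ |h₃ x| ≤ Real.sqrt (h₁ x * h₂ x) :=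
    ae_mono (Measure.restrict_mono hsub₂ le_rfl) hae
  have hi₁₁ : IntegrableOn h₁ K₁ := hi₁.mono_set hsub₁
  have hi₁₂ : IntegrableOn h₁ K₂ := hi₁.mono_set hsub₂
  have hi₂₁ : IntegrableOn h₂ K₁ := hi₂.mono_set hsub₁
  have hi₂₂ : IntegrableOn h₂ K₂ := hi₂.mono_set hsub₂
  have hi₃₁ : IntegrableOn h₃ K₁ := hi₃.mono_set hsub₁
  have hi₃₂ : IntegrableOn h₃ K₂ := hi₃.mono_set hsub₂
  have cs₁ := key_cs h₁ h₂ h₃ hi₁₁ hi₂₁ hi₃₁ hae₁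
  have cs₂ := key_cs h₁ h₂ h₃ hi₁₂ hi₂₂ hi₃₂ hae₂
  have hC₁ : 0 ≤ ∫ x in K₁, h₃ x := integral_nonneg_of_ae hsgn₁
  have hC₂ : (∫ x in K₂, h₃ x) ≤ 0 := integral_nonpos_of_ae hsgn₂
  rw [setIntegral_union hdisj hK₂ hi₁₁ hi₁₂, setIntegral_union hdisj hK₂ hi₂₁ hi₂₂,
    setIntegral_union hdisj hK₂ hi₃₁ hi₃₂]
  nlinarith [mul_nonpos_of_nonneg_of_nonpos hC₁ hC₂]
end

section
/- Let a, b ≥ 0 with ab < 1/2, and γ ∈ (0,1). Define F₁ = ((1 + γab)/(1 + ab))² and F₂ = (1 + ab)²/((1 + a²)(1 + b²)). If b/2 ≤ a ≤ 2b then 1 − F₁ ≥ (1−γ)/3 · max{a², b²}. -/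
/-- If `a, b ≥ 0`, `ab < 1/2`, `γ ∈ (0,1)` and `b/2 ≤ a ≤ 2b`, then
`1 − F₁ ≥ (1−γ)/3 · max{a², b²}` where `F₁ = ((1+γab)/(1+ab))²`. -/
theorem stmt7 (a b γ : ℝ) (ha : 0 ≤ a) (hb : 0 ≤ b) (hab : a * b < 1 / 2)
    (hγ : γ ∈ Set.Ioo (0:ℝ) 1) (h₁ : b / 2 ≤ a) (h₂ : a ≤ 2 * b) :
    (1 - γ) / 3 * max (a ^ 2) (b ^ 2) ≤
      1 - ((1 + γ * (a * b)) / (1 + a * b)) ^ 2 := by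
  obtain ⟨hγ0, hγ1⟩ := hγ
  have ht : 0 ≤ a * b := mul_nonneg ha hb
  have hY : (0:ℝ) < (1 + a * b) ^ 2 := by positivity
  have hu : (0:ℝ) ≤ 1 - γ := by linarith
  have hhalf : (0:ℝ) ≤ 1/2 - a * b := by linarith
  have key : ∀ m : ℝ, m ≤ 2 * (a * b) →
      (1 - γ) / 3 * m ≤ 1 - ((1 + γ * (a * b)) / (1 + a * b)) ^ 2 := by
    intro m hm
    rw [div_pow, le_sub_iff_add_le, add_comm, ← le_sub_iff_add_le, div_le_iff₀ hY]
    have A : (1 - γ) / 3 * m * (1 + a * b) ^ 2 ≤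
        (1 - γ) / 3 * (2 * (a * b)) * (1 + a * b) ^ 2 := by
      apply mul_le_mul_of_nonneg_right _ hY.le
      exact mul_le_mul_of_nonneg_left hm (by positivity)
    nlinarith [mul_nonneg (mul_nonneg hu ht) hhalf,
      mul_nonneg (mul_nonneg (mul_nonneg hu ht) ht) hhalf,
      mul_nonneg (mul_nonneg hu hγ0.le) ht,
      mul_nonneg (mul_nonneg (mul_nonneg hu hγ0.le) ht) ht]
  rcases le_total (a ^ 2) (b ^ 2) with h | h
  · rw [max_eq_right h]
    exact key _ (by nlinarith [mul_le_mul_of_nonneg_right (by linarith : b ≤ 2 * a) hb])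
  · rw [max_eq_left h]
    exact key _ (by nlinarith [mul_le_mul_of_nonneg_right h₂ ha])
end

section
/- Let a, b ≥ 0 with ab < 1/2, a < b/2, a ≤ 1, and b < 1. Then 1 − (1 + ab)²/((1 + a²)(1 + b²)) ≥ (1/10) · max{a², b²}. -/
/-- If `a, b ≥ 0`, `ab < 1/2`, `a < b/2`, `a ≤ 1` and `b < 1`, then
`1 − (1+ab)²/((1+a²)(1+b²)) ≥ (1/10) · max{a², b²}`. -/
theorem stmt8 (a b : ℝ) (ha : 0 ≤ a) (hb : 0 ≤ b) (hab : a * b < 1 / 2)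
    (h₁ : a < b / 2) (h₂ : a ≤ 1) (h₃ : b < 1) :
    1 / 10 * max (a ^ 2) (b ^ 2) ≤
      1 - (1 + a * b) ^ 2 / ((1 + a ^ 2) * (1 + b ^ 2)) := by
  have hmax : max (a ^ 2) (b ^ 2) = b ^ 2 := by
    apply max_eq_right
    nlinarith
  rw [hmax]
  have hd : (0:ℝ) < (1 + a ^ 2) * (1 + b ^ 2) := by positivity
  have key : 1 - (1 + a * b) ^ 2 / ((1 + a ^ 2) * (1 + b ^ 2))
      = (b - a) ^ 2 / ((1 + a ^ 2) * (1 + b ^ 2)) := by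
    field_simp; ring
  rw [key, le_div_iff₀ hd]
  have ha2 : a ^ 2 ≤ b ^ 2 / 4 := by nlinarith
  have hb2 : b ^ 2 ≤ 1 := by nlinarith
  nlinarith [mul_nonneg (show (0:ℝ) ≤ b/2 - a by linarith)
      (show (0:ℝ) ≤ 3*b/2 - a by linarith),
    mul_nonneg (sq_nonneg b) (show (0:ℝ) ≤ 1 - b^2 by linarith),
    mul_nonneg (sq_nonneg b) (show (0:ℝ) ≤ b^2/4 - a^2 by linarith),
    mul_nonneg (sq_nonneg (a*b)) (sq_nonneg b), sq_nonneg (a*b)]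
end

section
/- Let H be a trace-normalised Hamiltonian on (0,∞) whose diagonal entries h₁, h₂ do not vanish a.e. on any neighbourhood of 0, and set σ_H(t) = |h₃(t)|/√(h₁(t)h₂(t)) when h₃(t) ≠ 0 and 0 otherwise, and d(H,t) = det M(t)/(m₁(t)m₂(t)). Then for every γ ∈ (0,1) and every t > 0: (1/t)·λ((0,t) ∩ σ_H^{-1}([0,γ])) ≤ max{20, 6/(1−γ)} · d(H,t), where λ is Lebesgue measure. -/
open MeasureTheory Set

/-- Relative size of the off-diagonal entry of a Hamiltonian `[[h₁,h₃],[h₃,h₂]]`. -/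
noncomputable def sigmaH (h₁ h₂ h₃ : ℝ → ℝ) (s : ℝ) : ℝ :=
  if h₃ s ≠ 0 then |h₃ s| / Real.sqrt (h₁ s * h₂ s) else 0

/-- `d(H,t) = det M(t) / (m₁(t) m₂(t))` where `M(t) = ∫₀ᵗ H`. -/
noncomputable def dH (h₁ h₂ h₃ : ℝ → ℝ) (t : ℝ) : ℝ :=
  ((∫ s in Ioo 0 t, h₁ s) * (∫ s in Ioo 0 t, h₂ s) - (∫ s in Ioo 0 t, h₃ s) ^ 2) /
    ((∫ s in Ioo 0 t, h₁ s) * (∫ s in Ioo 0 t, h₂ s))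

/-!
Integrals of positive semidefinite `2 × 2` matrices are positive semidefinite (the quadratic form
`u x² + 2 w x + v` stays nonnegative after integration), which is Cauchy–Schwarz `m₃² ≤ m₁ m₂`.
On `F = σ_H⁻¹[0, γ]` we have `h₃² ≤ γ h₁ h₂`, so replacing `h₂` by `γ h₂` on a subset `S ⊆ F`
keeps `H` positive semidefinite, and Cauchy–Schwarz for the modified Hamiltonian yields
`(1 - γ) m₁ ∫_S h₂ ≤ det M`. As `h₁ + h₂ = 1`, `F` is covered by its parts where `h₂ ≥ 1/2` and
where `h₁ ≥ 1/2`; the estimate on each part (with `h₁`, `h₂` exchanged on the second) gives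
`(1 - γ) m₁ m₂ λ(F) ≤ 2 t det M`, i.e. the bound with the constant `2 / (1 - γ)`.
-/

lemma quadratic_nonneg_of_sq_le_mul {K : Type*} [Field K] [LinearOrder K] [IsStrictOrderedRing K]
    {a b c : K} (ha : 0 ≤ a) (hc : 0 ≤ c) (h : b ^ 2 ≤ a * c) (x : K) :
    0 ≤ a * (x * x) + 2 * b * x + c := by
  rcases ha.eq_or_lt with rfl | ha
  · nlinarith [sq_nonneg b]
  · nlinarith [sq_nonneg (a * x + b)]

section PSDIntegrals

variable {α : Type*} [MeasurableSpace α] {μ : Measure α} {u v w : α → ℝ}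

lemma sq_integral_le_integral_mul_integral (hu : Integrable u μ) (hv : Integrable v μ)
    (hw : Integrable w μ) (h : ∀ᵐ s ∂μ, 0 ≤ u s ∧ 0 ≤ v s ∧ w s ^ 2 ≤ u s * v s) :
    (∫ s, w s ∂μ) ^ 2 ≤ (∫ s, u s ∂μ) * ∫ s, v s ∂μ := by
  have hquad : ∀ x : ℝ, 0 ≤ (∫ s, u s ∂μ) * (x * x) + 2 * (∫ s, w s ∂μ) * x + ∫ s, v s ∂μ := by
    intro x
    have hint : ∫ s, (u s * (x * x) + 2 * w s * x + v s) ∂μ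
        = (∫ s, u s ∂μ) * (x * x) + 2 * (∫ s, w s ∂μ) * x + ∫ s, v s ∂μ := by
      rw [integral_add (f := fun s => u s * (x * x) + 2 * w s * x)
          ((hu.mul_const _).add ((hw.const_mul 2).mul_const x)) hv,
        integral_add (hu.mul_const _) ((hw.const_mul 2).mul_const x),
        integral_mul_const, integral_mul_const, integral_const_mul]
    rw [← hint]
    refine integral_nonneg_of_ae ?_
    filter_upwards [h] with s ⟨hus, hvs, hws⟩
    exact quadratic_nonneg_of_sq_le_mul hus hvs hws x
  have := discrim_le_zero hquad
  rw [discrim] at this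
  linarith

lemma one_sub_mul_integral_mul_setIntegral_le {S : Set α} {γ : ℝ} (hS : MeasurableSet S)
    (hγ : 0 ≤ γ) (hu : Integrable u μ) (hv : Integrable v μ) (hw : Integrable w μ)
    (h : ∀ᵐ s ∂μ, 0 ≤ u s ∧ 0 ≤ v s ∧ w s ^ 2 ≤ u s * v s)
    (hSγ : ∀ᵐ s ∂μ, s ∈ S → w s ^ 2 ≤ γ * (u s * v s)) :
    (1 - γ) * (∫ s, u s ∂μ) * (∫ s in S, v s ∂μ) ≤
      (∫ s, u s ∂μ) * (∫ s, v s ∂μ) - (∫ s, w s ∂μ) ^ 2 := by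
  set v' : α → ℝ := fun s => v s - (1 - γ) * S.indicator v s
  have hv' : Integrable v' μ := hv.sub ((hv.indicator hS).const_mul _)
  have hint : ∫ s, v' s ∂μ = (∫ s, v s ∂μ) - (1 - γ) * ∫ s in S, v s ∂μ := by
    rw [integral_sub hv ((hv.indicator hS).const_mul _), integral_const_mul,
      integral_indicator hS]
  have hpsd : ∀ᵐ s ∂μ, 0 ≤ u s ∧ 0 ≤ v' s ∧ w s ^ 2 ≤ u s * v' s := by
    filter_upwards [h, hSγ] with s ⟨hus, hvs, hws⟩ hsγ
    by_cases hs : s ∈ S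
    · simp only [v', indicator_of_mem hs]
      exact ⟨hus, by nlinarith, by nlinarith [hsγ hs]⟩
    · simp only [v', indicator_of_notMem hs]
      exact ⟨hus, by linarith, by linarith⟩
  have := sq_integral_le_integral_mul_integral hu hv' hw hpsd
  rw [hint] at this
  linarith

variable [IsFiniteMeasure μ]

lemma integrable_of_trace_eq_one (hu : Measurable u) (hv : Measurable v) (hw : Measurable w)
    (hH : ∀ᵐ s ∂μ, 0 ≤ u s ∧ 0 ≤ v s ∧ w s ^ 2 ≤ u s * v s ∧ u s + v s = 1) :
    Integrable u μ ∧ Integrable v μ ∧ Integrable w μ := by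
  refine ⟨.of_bound hu.aestronglyMeasurable 1 ?_, .of_bound hv.aestronglyMeasurable 1 ?_,
    .of_bound hw.aestronglyMeasurable 1 ?_⟩ <;>
  filter_upwards [hH] with s ⟨hus, hvs, hws, hsum⟩ <;>
  rw [Real.norm_eq_abs]
  · exact abs_le.2 ⟨by linarith, by linarith⟩
  · exact abs_le.2 ⟨by linarith, by linarith⟩
  · exact (sq_le_one_iff_abs_le_one _).1 (by nlinarith)

lemma measureReal_div_le_of_sq_le_mul {F : Set α} {γ : ℝ} (hu : Measurable u)
    (hv : Measurable v) (hw : Measurable w)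
    (hH : ∀ᵐ s ∂μ, 0 ≤ u s ∧ 0 ≤ v s ∧ w s ^ 2 ≤ u s * v s ∧ u s + v s = 1)
    (hF : MeasurableSet F) (hγ : γ ∈ Ico 0 1)
    (hFγ : ∀ᵐ s ∂μ, s ∈ F → w s ^ 2 ≤ γ * (u s * v s))
    (ha : 0 < ∫ s, u s ∂μ) (hb : 0 < ∫ s, v s ∂μ) :
    μ.real F / μ.real univ ≤
      2 / (1 - γ) * (((∫ s, u s ∂μ) * (∫ s, v s ∂μ) - (∫ s, w s ∂μ) ^ 2) /
        ((∫ s, u s ∂μ) * ∫ s, v s ∂μ)) := by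
  obtain ⟨hγ0, hγ1⟩ := hγ
  have h1γ : 0 < 1 - γ := sub_pos.2 hγ1
  obtain ⟨iu, iv, iw⟩ := integrable_of_trace_eq_one hu hv hw hH
  have hpsd : ∀ᵐ s ∂μ, 0 ≤ u s ∧ 0 ≤ v s ∧ w s ^ 2 ≤ u s * v s :=
    hH.mono fun s hs => ⟨hs.1, hs.2.1, hs.2.2.1⟩
  have hpsd' : ∀ᵐ s ∂μ, 0 ≤ v s ∧ 0 ≤ u s ∧ w s ^ 2 ≤ v s * u s :=
    hpsd.mono fun s hs => ⟨hs.2.1, hs.1, mul_comm (u s) (v s) ▸ hs.2.2⟩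
  set a := ∫ s, u s ∂μ
  set b := ∫ s, v s ∂μ
  set D := a * b - (∫ s, w s ∂μ) ^ 2
  set A := F ∩ {s | 1 / 2 ≤ v s}
  set B := F ∩ {s | 1 / 2 ≤ u s}
  have hAm : MeasurableSet A := hF.inter (measurableSet_le measurable_const hv)
  have hBm : MeasurableSet B := hF.inter (measurableSet_le measurable_const hu)
  have hcover : μ.real F ≤ μ.real A + μ.real B := by
    refine (ENNReal.toReal_mono (measure_ne_top μ _) (measure_mono_ae ?_)).trans
      (measureReal_union_le A B)
    filter_upwards [hH] with s hs hsF
    by_cases hvs : 1 / 2 ≤ v s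
    · exact Or.inl ⟨hsF, hvs⟩
    · exact Or.inr ⟨hsF, show 1 / 2 ≤ u s by linarith [hs.2.2.2]⟩
  have hA : (1 - γ) * a * (1 / 2 * μ.real A) ≤ D :=
    calc (1 - γ) * a * (1 / 2 * μ.real A) ≤ (1 - γ) * a * ∫ s in A, v s ∂μ := by
          gcongr
          exact setIntegral_ge_of_const_le_real hAm (measure_ne_top μ _) (fun s hs => hs.2)
            iv.integrableOn
      _ ≤ D := one_sub_mul_integral_mul_setIntegral_le hAm hγ0 iu iv iw hpsd
          (hFγ.mono fun s hs hsA => hs hsA.1)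
  have hB : (1 - γ) * b * (1 / 2 * μ.real B) ≤ D :=
    calc (1 - γ) * b * (1 / 2 * μ.real B) ≤ (1 - γ) * b * ∫ s in B, u s ∂μ := by
          gcongr
          exact setIntegral_ge_of_const_le_real hBm (measure_ne_top μ _) (fun s hs => hs.2)
            iu.integrableOn
      _ ≤ b * a - (∫ s, w s ∂μ) ^ 2 := one_sub_mul_integral_mul_setIntegral_le hBm hγ0 iv iu iw
          hpsd' (hFγ.mono fun s hs hsB => mul_comm (u s) (v s) ▸ hs hsB.1)
      _ = D := by rw [mul_comm]
  have hab : a + b = μ.real univ := by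
    rw [← integral_add iu iv, integral_congr_ae (hH.mono fun s hs => hs.2.2.2), integral_const,
      smul_eq_mul, mul_one]
  have hD : 0 ≤ D := sub_nonneg.2 (sq_integral_le_integral_mul_integral iu iv iw hpsd)
  rw [← hab, div_mul_div_comm, div_le_div_iff₀ (by positivity) (mul_pos h1γ (mul_pos ha hb))]
  calc μ.real F * ((1 - γ) * (a * b))
      ≤ (μ.real A + μ.real B) * ((1 - γ) * (a * b)) := by gcongr
    _ = 2 * b * ((1 - γ) * a * (1 / 2 * μ.real A)) +
        2 * a * ((1 - γ) * b * (1 / 2 * μ.real B)) := by ring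
    _ ≤ 2 * b * D + 2 * a * D := by gcongr
    _ = 2 * D * (a + b) := by ring

end PSDIntegrals

lemma measurable_sigmaH {h₁ h₂ h₃ : ℝ → ℝ} (h₁m : Measurable h₁) (h₂m : Measurable h₂)
    (h₃m : Measurable h₃) : Measurable (sigmaH h₁ h₂ h₃) :=
  Measurable.ite (h₃m (measurableSet_singleton 0)).compl
    (h₃m.abs.div (Real.continuous_sqrt.measurable.comp (h₁m.mul h₂m))) measurable_const

lemma sq_le_mul_of_sigmaH_le {h₁ h₂ h₃ : ℝ → ℝ} {s γ : ℝ} (hs : h₃ s ^ 2 ≤ h₁ s * h₂ s)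
    (hσ : sigmaH h₁ h₂ h₃ s ≤ γ) : h₃ s ^ 2 ≤ γ ^ 2 * (h₁ s * h₂ s) := by
  by_cases h₃s : h₃ s = 0
  · rw [h₃s]
    nlinarith [sq_nonneg γ]
  · have hpos : 0 < Real.sqrt (h₁ s * h₂ s) :=
      Real.sqrt_pos.2 (lt_of_lt_of_le (pow_pos (abs_pos.2 h₃s) 2 |>.trans_eq (sq_abs _)) hs)
    rw [sigmaH, if_pos h₃s, div_le_iff₀ hpos] at hσ
    calc h₃ s ^ 2 = |h₃ s| ^ 2 := (sq_abs _).symm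
      _ ≤ (γ * Real.sqrt (h₁ s * h₂ s)) ^ 2 := pow_le_pow_left₀ (abs_nonneg _) hσ 2
      _ = γ ^ 2 * (h₁ s * h₂ s) := by rw [mul_pow, Real.sq_sqrt (by nlinarith [sq_nonneg (h₃ s)])]

theorem stmt9_general (h₁ h₂ h₃ : ℝ → ℝ)
    (hmeas : Measurable h₁ ∧ Measurable h₂ ∧ Measurable h₃)
    (hae : ∀ᵐ s ∂(volume.restrict (Ioi (0:ℝ))),
      0 ≤ h₁ s ∧ 0 ≤ h₂ s ∧ h₃ s ^ 2 ≤ h₁ s * h₂ s ∧ h₁ s + h₂ s = 1)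
    (hm : ∀ t > (0:ℝ), (0 < ∫ s in Ioo 0 t, h₁ s) ∧ (0 < ∫ s in Ioo 0 t, h₂ s)) :
    ∀ γ ∈ Set.Ioo (0:ℝ) 1, ∀ t > (0:ℝ),
      1 / t * (volume (Ioo 0 t ∩ {x | sigmaH h₁ h₂ h₃ x ∈ Icc 0 γ})).toReal ≤
        max 20 (6 / (1 - γ)) * dH h₁ h₂ h₃ t := by
  obtain ⟨h₁m, h₂m, h₃m⟩ := hmeas
  rintro γ ⟨hγ0, hγ1⟩ t ht
  set F := {x | sigmaH h₁ h₂ h₃ x ∈ Icc 0 γ}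
  have hF : MeasurableSet F := measurable_sigmaH h₁m h₂m h₃m measurableSet_Icc
  have hH := ae_restrict_of_ae_restrict_of_subset (Ioo_subset_Ioi_self : Ioo 0 t ⊆ Ioi 0) hae
  have hFγ : ∀ᵐ s ∂volume.restrict (Ioo 0 t), s ∈ F → h₃ s ^ 2 ≤ γ * (h₁ s * h₂ s) := by
    filter_upwards [hH] with s hs hsF
    refine (sq_le_mul_of_sigmaH_le hs.2.2.1 hsF.2).trans ?_
    gcongr
    · exact mul_nonneg hs.1 hs.2.1
    · nlinarith
  have key : volume.real (Ioo 0 t ∩ F) / t ≤ 2 / (1 - γ) * dH h₁ h₂ h₃ t := by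
    simpa [dH, measureReal_restrict_apply hF, inter_comm, ht.le] using
      measureReal_div_le_of_sq_le_mul h₁m h₂m h₃m hH hF ⟨hγ0.le, hγ1⟩ hFγ (hm t ht).1 (hm t ht).2
  have h1γ : 0 < 1 - γ := sub_pos.2 hγ1
  have hdH : 0 ≤ dH h₁ h₂ h₃ t :=
    (mul_nonneg_iff_of_pos_left (div_pos two_pos h1γ)).1
      ((div_nonneg measureReal_nonneg ht.le).trans key)
  calc 1 / t * volume.real (Ioo 0 t ∩ F) = volume.real (Ioo 0 t ∩ F) / t := one_div_mul_eq_div _ _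
    _ ≤ 2 / (1 - γ) * dH h₁ h₂ h₃ t := key
    _ ≤ max 20 (6 / (1 - γ)) * dH h₁ h₂ h₃ t := by
      gcongr
      exact (div_le_div_of_nonneg_right (by norm_num) h1γ.le).trans (le_max_right _ _)

/-- For a trace-normalised Hamiltonian whose diagonal entries do not vanish a.e. near `0`:
`(1/t)·λ((0,t) ∩ σ_H⁻¹([0,γ])) ≤ max{20, 6/(1−γ)} · d(H,t)` for every `γ ∈ (0,1)`, `t > 0`. -/
theorem stmt9 (h₁ h₂ h₃ : ℝ → ℝ)
    (hmeas : Measurable h₁ ∧ Measurable h₂ ∧ Measurable h₃)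
    (hae : ∀ᵐ s ∂(volume.restrict (Ioi (0:ℝ))),
      0 ≤ h₁ s ∧ 0 ≤ h₂ s ∧ h₃ s ^ 2 ≤ h₁ s * h₂ s ∧ h₁ s + h₂ s = 1)
    (hnv : ∀ ε > (0:ℝ), volume {s ∈ Ioo 0 ε | h₁ s ≠ 0} ≠ 0 ∧
      volume {s ∈ Ioo 0 ε | h₂ s ≠ 0} ≠ 0)
    (hm : ∀ t > (0:ℝ), (0 < ∫ s in Ioo 0 t, h₁ s) ∧ (0 < ∫ s in Ioo 0 t, h₂ s)) :
    ∀ γ ∈ Set.Ioo (0:ℝ) 1, ∀ t > (0:ℝ),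
      1 / t * (volume (Ioo 0 t ∩ {x | sigmaH h₁ h₂ h₃ x ∈ Icc 0 γ})).toReal ≤
        max 20 (6 / (1 - γ)) * dH h₁ h₂ h₃ t :=
  stmt9_general h₁ h₂ h₃ hmeas hae hm
end

section
/- Let H be a trace-normalised Hamiltonian on (0,∞) with d(H,t) = det M(t)/(m₁(t)m₂(t)), and define the rotation angle φ_H(t) ∈ [0,π) and ζ_H(t) = e^{2iφ_H(t)}. Let 0 ≤ φ₀ < ψ₀ ≤ π, I₁ = ζ_H^{-1}(arc from −φ₀ to φ₀), I₂ = ζ_H^{-1}(arc from ψ₀ to 2π−ψ₀). Then for all t > 0: d(H,t) ≥ sin²((ψ₀−φ₀)/2) · (1/t)λ(I₁ ∩ (0,t)) · (1/t)λ(I₂ ∩ (0,t)). -/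
/-!
With `f = √h₁` and `g = √h₂`, Lagrange's identity
`∫∫ (f x g y - f y g x)² = 2 (∫ f² ∫ g² - (∫ f g)²)` and `|h₃| ≤ f g` bound `2 det M(t)` from
below by the double integral over `(0,t)²`. Since `Re ζ_H = cos 2φ_H = 1 - 2 h₂`, we have
`h₂ ≤ sin² (φ₀/2)` on `I₁` and `h₂ ≥ sin² (ψ₀/2)` on `I₂`, so on `I₁ × I₂` the integrand is at
least `sin² ((ψ₀ - φ₀)/2)`. Finally `m₁ m₂ ≤ t²/4` because `m₁ + m₂ = t`.
-/

open MeasureTheory Set Real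

/-- Rotation angle `φ_H(t) ∈ [0,π)` of a Hamiltonian `[[h₁,h₃],[h₃,h₂]]`;
`arccot x = π/2 − arctan x` (valued in `(0,π)` on the relevant range). -/
noncomputable def phiH (h₁ h₂ h₃ : ℝ → ℝ) (s : ℝ) : ℝ :=
  if h₂ s ≠ 0 then
    (if 0 ≤ h₃ s then π / 2 - Real.arctan (Real.sqrt (h₁ s / h₂ s))
      else π - (π / 2 - Real.arctan (Real.sqrt (h₁ s / h₂ s))))
  else 0

/-- Rotation `ζ_H(t) = e^{2iφ_H(t)}`. -/
noncomputable def zetaH (h₁ h₂ h₃ : ℝ → ℝ) (s : ℝ) : ℂ :=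
  Complex.exp (((2 * phiH h₁ h₂ h₃ s : ℝ) : ℂ) * Complex.I)

/-- The arc `A[α,β] = {e^{iθ} : α ≤ θ ≤ β}` of the unit circle. -/
def arcSet (α β : ℝ) : Set ℂ :=
  {z | ∃ θ ∈ Set.Icc α β, z = Complex.exp ((θ : ℂ) * Complex.I)}

theorem sq_mul_sub_mul_eq {α : Type*} (f g : α → ℝ) :
    (fun p : α × α => (f p.1 * g p.2 - f p.2 * g p.1) ^ 2) = fun p =>
      f p.1 ^ 2 * g p.2 ^ 2 + g p.1 ^ 2 * f p.2 ^ 2 - 2 * ((f p.1 * g p.1) * (f p.2 * g p.2)) := by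
  ext p; ring

section Lagrange

variable {α : Type*} [MeasurableSpace α] {μ : Measure α} {f g : α → ℝ}
  (hf : MemLp f 2 μ) (hg : MemLp g 2 μ)
include hf hg

theorem integrable_prod_sq_mul_sub_mul :
    Integrable (fun p : α × α => (f p.1 * g p.2 - f p.2 * g p.1) ^ 2) (μ.prod μ) := by
  have hfg : Integrable (fun x => f x * g x) μ := hf.integrable_mul hg
  rw [sq_mul_sub_mul_eq]
  exact ((hf.integrable_sq.mul_prod hg.integrable_sq).add
    (hg.integrable_sq.mul_prod hf.integrable_sq)).sub ((hfg.mul_prod hfg).const_mul 2)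

theorem integral_prod_sq_mul_sub_mul [SFinite μ] :
    ∫ p, (f p.1 * g p.2 - f p.2 * g p.1) ^ 2 ∂μ.prod μ =
      2 * ((∫ x, f x ^ 2 ∂μ) * (∫ x, g x ^ 2 ∂μ) - (∫ x, f x * g x ∂μ) ^ 2) := by
  have i₁ : Integrable (fun p : α × α => f p.1 ^ 2 * g p.2 ^ 2) (μ.prod μ) :=
    hf.integrable_sq.mul_prod hg.integrable_sq
  have i₂ : Integrable (fun p : α × α => g p.1 ^ 2 * f p.2 ^ 2) (μ.prod μ) :=
    hg.integrable_sq.mul_prod hf.integrable_sq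
  have i₁₂ : Integrable (fun p : α × α => f p.1 ^ 2 * g p.2 ^ 2 + g p.1 ^ 2 * f p.2 ^ 2)
    (μ.prod μ) := i₁.add i₂
  have hfg : Integrable (fun x => f x * g x) μ := hf.integrable_mul hg
  have i₃ : Integrable (fun p : α × α => 2 * ((f p.1 * g p.1) * (f p.2 * g p.2))) (μ.prod μ) :=
    (hfg.mul_prod hfg).const_mul 2
  rw [sq_mul_sub_mul_eq, integral_sub i₁₂ i₃, integral_add i₁ i₂, integral_const_mul,
    integral_prod_mul (fun x => f x ^ 2) (fun x => g x ^ 2),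
    integral_prod_mul (fun x => g x ^ 2) (fun x => f x ^ 2),
    integral_prod_mul (fun x => f x * g x) (fun x => f x * g x)]
  ring

theorem mul_measureReal_le_integral_mul_integral_sub_sq [IsFiniteMeasure μ]
    {A B : Set α} (hA : MeasurableSet A) (hB : MeasurableSet B) {c : ℝ}
    (hc : ∀ᵐ p ∂μ.prod μ, p ∈ A ×ˢ B → c ≤ (f p.1 * g p.2 - f p.2 * g p.1) ^ 2) :
    c * (μ.real A * μ.real B) ≤
      2 * ((∫ x, f x ^ 2 ∂μ) * (∫ x, g x ^ 2 ∂μ) - (∫ x, f x * g x ∂μ) ^ 2) := by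
  have hint := integrable_prod_sq_mul_sub_mul hf hg
  rw [← integral_prod_sq_mul_sub_mul hf hg]
  calc c * (μ.real A * μ.real B) = ∫ _ in A ×ˢ B, c ∂μ.prod μ := by
        rw [setIntegral_const, measureReal_prod_prod, smul_eq_mul, mul_comm]
    _ ≤ ∫ p in A ×ˢ B, (f p.1 * g p.2 - f p.2 * g p.1) ^ 2 ∂μ.prod μ :=
        setIntegral_mono_on_ae (integrableOn_const (by finiteness)) hint.integrableOn
          (hA.prod hB) hc
    _ ≤ _ := setIntegral_le_integral hint (.of_forall fun p => sq_nonneg _)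

end Lagrange

theorem measureReal_mono_ae {α : Type*} [MeasurableSpace α] {μ : Measure α} [IsFiniteMeasure μ]
    {s t : Set α} (h : s ≤ᵐ[μ] t) : μ.real s ≤ μ.real t :=
  ENNReal.toReal_mono (measure_ne_top μ t) (measure_mono_ae h)

theorem div_add_sq_le_of_le_two_mul_sub {X a b c : ℝ} (hX : 0 ≤ X) (ha : 0 < a) (hb : 0 < b)
    (h : X ≤ 2 * (a * b - c ^ 2)) : X / (a + b) ^ 2 ≤ (a * b - c ^ 2) / (a * b) := by
  rw [div_le_div_iff₀ (by positivity) (by positivity)]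
  nlinarith [mul_le_mul_of_nonneg_right h (mul_pos ha hb).le,
    mul_nonneg (hX.trans h) (sq_nonneg (a - b))]

theorem sin_sub_le_mul_sub_mul {a b c₁ s₁ c₂ s₂ : ℝ} (hb₀ : 0 ≤ b) (hb : b ≤ π / 2)
    (hc₁ : 0 ≤ c₁) (hs₁ : 0 ≤ s₁) (h₁ : c₁ ^ 2 + s₁ ^ 2 = 1) (h₂ : c₂ ^ 2 + s₂ ^ 2 = 1)
    (hs₁a : s₁ ≤ sin a) (hs₂b : sin b ≤ s₂) :
    sin (b - a) ≤ c₁ * s₂ - c₂ * s₁ := by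
  have hsb : 0 ≤ sin b := sin_nonneg_of_nonneg_of_le_pi hb₀ (by linarith [pi_pos])
  have hcb : 0 ≤ cos b := cos_nonneg_of_mem_Icc ⟨by linarith [pi_pos], hb⟩
  have hca : cos a ≤ c₁ := by nlinarith [sin_sq_add_cos_sq a]
  have hc₂b : c₂ ≤ cos b := by nlinarith [sin_sq_add_cos_sq b]
  rw [sin_sub]
  nlinarith [mul_le_mul hca hs₂b hsb hc₁, mul_le_mul hc₂b hs₁a hs₁ hcb]

theorem cos_eq_one_sub_two_mul_sin_half_sq (x : ℝ) : cos x = 1 - 2 * sin (x / 2) ^ 2 := by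
  rw [sin_sq_eq_half_sub, show 2 * (x / 2) = x by ring]
  ring

theorem cos_le_re_of_mem_arcSet {α : ℝ} (hα : α ≤ π) {z : ℂ} (hz : z ∈ arcSet (-α) α) :
    cos α ≤ z.re := by
  obtain ⟨θ, hθ, rfl⟩ := hz
  rw [Complex.exp_ofReal_mul_I_re, ← cos_abs θ]
  exact cos_le_cos_of_nonneg_of_le_pi (abs_nonneg θ) hα (abs_le.2 hθ)

theorem re_le_cos_of_mem_arcSet {β : ℝ} (hβ : 0 ≤ β) {z : ℂ} (hz : z ∈ arcSet β (2 * π - β)) :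
    z.re ≤ cos β := by
  obtain ⟨θ, ⟨hβθ, hθβ⟩, rfl⟩ := hz
  rw [Complex.exp_ofReal_mul_I_re]
  rcases le_total θ π with hθ | hθ
  · exact cos_le_cos_of_nonneg_of_le_pi hβ hθ hβθ
  · rw [← cos_two_pi_sub θ]
    exact cos_le_cos_of_nonneg_of_le_pi hβ (by linarith) (by linarith)

/-- The matrix `[[h₁, h₃], [h₃, h₂]]` is positive semidefinite with trace one at `s`. -/
structure IsTraceNormalizedAt {α : Type*} (h₁ h₂ h₃ : α → ℝ) (s : α) : Prop where
  nonneg_left : 0 ≤ h₁ s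
  nonneg_right : 0 ≤ h₂ s
  sq_le_mul : h₃ s ^ 2 ≤ h₁ s * h₂ s
  add_eq_one : h₁ s + h₂ s = 1

namespace IsTraceNormalizedAt

variable {α : Type*} {h₁ h₂ h₃ : α → ℝ} {s : α} (hs : IsTraceNormalizedAt h₁ h₂ h₃ s)
include hs

theorem le_one_left : h₁ s ≤ 1 := by linarith [hs.nonneg_right, hs.add_eq_one]

theorem le_one_right : h₂ s ≤ 1 := by linarith [hs.nonneg_left, hs.add_eq_one]

theorem sqrt_sq_add_sqrt_sq : √(h₁ s) ^ 2 + √(h₂ s) ^ 2 = 1 := by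
  rw [sq_sqrt hs.nonneg_left, sq_sqrt hs.nonneg_right, hs.add_eq_one]

theorem abs_le_sqrt_mul_sqrt : |h₃ s| ≤ √(h₁ s) * √(h₂ s) := by
  rw [← sqrt_mul hs.nonneg_left, ← sqrt_sq_eq_abs]
  exact sqrt_le_sqrt hs.sq_le_mul

theorem sin_sub_le {s' : α} (hs' : IsTraceNormalizedAt h₁ h₂ h₃ s') {a b : ℝ} (ha : 0 ≤ a)
    (hab : a ≤ b) (hb : b ≤ π / 2) (ha' : h₂ s ≤ sin a ^ 2) (hb' : sin b ^ 2 ≤ h₂ s') :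
    sin (b - a) ≤ √(h₁ s) * √(h₂ s') - √(h₁ s') * √(h₂ s) :=
  sin_sub_le_mul_sub_mul (ha.trans hab) hb (sqrt_nonneg _) (sqrt_nonneg _)
    hs.sqrt_sq_add_sqrt_sq hs'.sqrt_sq_add_sqrt_sq
    ((sqrt_le_sqrt ha').trans_eq (sqrt_sq (sin_nonneg_of_nonneg_of_le_pi ha (by linarith))))
    ((le_abs_self _).trans (abs_le_sqrt hb'))

end IsTraceNormalizedAt

section TraceNormalized

variable {α : Type*} [MeasurableSpace α] {μ : Measure α} [IsFiniteMeasure μ] {h₁ h₂ h₃ : α → ℝ}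

theorem integral_add_integral_eq_measureReal_univ (hm₁ : AEMeasurable h₁ μ)
    (hm₂ : AEMeasurable h₂ μ) (hH : ∀ᵐ s ∂μ, IsTraceNormalizedAt h₁ h₂ h₃ s) :
    ∫ s, h₁ s ∂μ + ∫ s, h₂ s ∂μ = μ.real univ := by
  have i₁ : Integrable h₁ μ := .of_mem_Icc 0 1 hm₁ <| hH.mono fun s hs =>
    ⟨hs.nonneg_left, hs.le_one_left⟩
  have i₂ : Integrable h₂ μ := .of_mem_Icc 0 1 hm₂ <| hH.mono fun s hs =>
    ⟨hs.nonneg_right, hs.le_one_right⟩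
  rw [← integral_add i₁ i₂, integral_congr_ae (hH.mono fun s hs => hs.add_eq_one),
    integral_const, smul_eq_mul, mul_one]

theorem sin_sq_mul_measureReal_le (hm₁ : AEMeasurable h₁ μ) (hm₂ : Measurable h₂)
    (hH : ∀ᵐ s ∂μ, IsTraceNormalizedAt h₁ h₂ h₃ s) {a b : ℝ} (ha : 0 ≤ a) (hab : a ≤ b)
    (hb : b ≤ π / 2) :
    sin (b - a) ^ 2 * (μ.real {s | h₂ s ≤ sin a ^ 2} * μ.real {s | sin b ^ 2 ≤ h₂ s}) ≤
      2 * ((∫ s, h₁ s ∂μ) * (∫ s, h₂ s ∂μ) - (∫ s, h₃ s ∂μ) ^ 2) := by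
  set f : α → ℝ := fun s => √(h₁ s)
  set g : α → ℝ := fun s => √(h₂ s)
  have hf : MemLp f 2 μ := memLp_of_bounded (a := 0) (b := 1)
    (hH.mono fun s hs => ⟨sqrt_nonneg _, sqrt_le_one.2 hs.le_one_left⟩)
    hm₁.sqrt.aestronglyMeasurable 2
  have hg : MemLp g 2 μ := memLp_of_bounded (a := 0) (b := 1)
    (hH.mono fun s hs => ⟨sqrt_nonneg _, sqrt_le_one.2 hs.le_one_right⟩)
    hm₂.sqrt.aestronglyMeasurable 2
  have hf₂ : ∫ s, f s ^ 2 ∂μ = ∫ s, h₁ s ∂μ :=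
    integral_congr_ae <| hH.mono fun s hs => sq_sqrt hs.nonneg_left
  have hg₂ : ∫ s, g s ^ 2 ∂μ = ∫ s, h₂ s ∂μ :=
    integral_congr_ae <| hH.mono fun s hs => sq_sqrt hs.nonneg_right
  have hfg : (∫ s, h₃ s ∂μ) ^ 2 ≤ (∫ s, f s * g s ∂μ) ^ 2 := by
    refine (sq_abs _).symm.trans_le (pow_le_pow_left₀ (abs_nonneg _) ?_ 2)
    exact norm_integral_le_of_norm_le (f := h₃) (g := fun s => f s * g s) (hf.integrable_mul hg)
      (hH.mono fun s hs => hs.abs_le_sqrt_mul_sqrt)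
  have hsin : 0 ≤ sin (b - a) := sin_nonneg_of_nonneg_of_le_pi (by linarith) (by linarith)
  have hc : ∀ᵐ p ∂μ.prod μ, p ∈ {s | h₂ s ≤ sin a ^ 2} ×ˢ {s | sin b ^ 2 ≤ h₂ s} →
      sin (b - a) ^ 2 ≤ (f p.1 * g p.2 - f p.2 * g p.1) ^ 2 := by
    filter_upwards [Measure.quasiMeasurePreserving_fst.ae hH,
      Measure.quasiMeasurePreserving_snd.ae hH] with p hp₁ hp₂ hp
    exact pow_le_pow_left₀ hsin (hp₁.sin_sub_le hp₂ ha hab hb hp.1 hp.2) 2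
  calc _ ≤ 2 * ((∫ s, f s ^ 2 ∂μ) * (∫ s, g s ^ 2 ∂μ) - (∫ s, f s * g s ∂μ) ^ 2) :=
        mul_measureReal_le_integral_mul_integral_sub_sq hf hg
          (measurableSet_le hm₂ measurable_const) (measurableSet_le measurable_const hm₂) hc
    _ ≤ _ := by rw [hf₂, hg₂]; linarith

end TraceNormalized

section Rotation

variable {h₁ h₂ h₃ : ℝ → ℝ} {s : ℝ} (H₁ : 0 ≤ h₁ s) (H₂ : 0 ≤ h₂ s) (H : h₁ s + h₂ s = 1)
include H₁ H₂ H

theorem sin_sq_phiH : sin (phiH h₁ h₂ h₃ s) ^ 2 = h₂ s := by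
  by_cases hz : h₂ s = 0
  · simp [phiH, hz]
  have key : sin (π / 2 - arctan √(h₁ s / h₂ s)) ^ 2 = h₂ s := by
    rw [sin_pi_div_two_sub, cos_arctan, div_pow, one_pow,
      sq_sqrt (by positivity), sq_sqrt (div_nonneg H₁ H₂)]
    field_simp
    linarith
  simp only [phiH, ne_eq, hz, not_false_eq_true, if_true]
  split_ifs
  · exact key
  · rwa [sin_pi_sub]

theorem re_zetaH : (zetaH h₁ h₂ h₃ s).re = 1 - 2 * h₂ s := by
  rw [zetaH, Complex.exp_ofReal_mul_I_re, cos_two_mul, cos_sq', sin_sq_phiH H₁ H₂ H]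
  ring

theorem le_sin_sq_half_of_zetaH_mem_arcSet {φ₀ : ℝ} (hφ₀ : φ₀ ≤ π)
    (hz : zetaH h₁ h₂ h₃ s ∈ arcSet (-φ₀) φ₀) : h₂ s ≤ sin (φ₀ / 2) ^ 2 := by
  have := cos_le_re_of_mem_arcSet hφ₀ hz
  rw [re_zetaH H₁ H₂ H, cos_eq_one_sub_two_mul_sin_half_sq] at this
  linarith

theorem sin_sq_half_le_of_zetaH_mem_arcSet {ψ₀ : ℝ} (hψ₀ : 0 ≤ ψ₀)
    (hz : zetaH h₁ h₂ h₃ s ∈ arcSet ψ₀ (2 * π - ψ₀)) : sin (ψ₀ / 2) ^ 2 ≤ h₂ s := by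
  have := re_le_cos_of_mem_arcSet hψ₀ hz
  rw [re_zetaH H₁ H₂ H, cos_eq_one_sub_two_mul_sin_half_sq] at this
  linarith

end Rotation

theorem measureReal_zetaH_preimage_arcSet_neg_le {h₁ h₂ h₃ : ℝ → ℝ} {μ : Measure ℝ}
    [IsFiniteMeasure μ] (hH : ∀ᵐ s ∂μ, IsTraceNormalizedAt h₁ h₂ h₃ s) {φ₀ : ℝ} (hφ₀ : φ₀ ≤ π) :
    μ.real (zetaH h₁ h₂ h₃ ⁻¹' arcSet (-φ₀) φ₀) ≤ μ.real {s | h₂ s ≤ sin (φ₀ / 2) ^ 2} :=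
  measureReal_mono_ae <| hH.mono fun _ hs =>
    le_sin_sq_half_of_zetaH_mem_arcSet hs.nonneg_left hs.nonneg_right hs.add_eq_one hφ₀

theorem measureReal_le_zetaH_preimage_arcSet {h₁ h₂ h₃ : ℝ → ℝ} {μ : Measure ℝ}
    [IsFiniteMeasure μ] (hH : ∀ᵐ s ∂μ, IsTraceNormalizedAt h₁ h₂ h₃ s) {ψ₀ : ℝ} (hψ₀ : 0 ≤ ψ₀) :
    μ.real (zetaH h₁ h₂ h₃ ⁻¹' arcSet ψ₀ (2 * π - ψ₀)) ≤ μ.real {s | sin (ψ₀ / 2) ^ 2 ≤ h₂ s} :=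
  measureReal_mono_ae <| hH.mono fun _ hs =>
    sin_sq_half_le_of_zetaH_mem_arcSet hs.nonneg_left hs.nonneg_right hs.add_eq_one hψ₀

/-- For `0 ≤ φ₀ < ψ₀ ≤ π`, with `I₁ = ζ_H⁻¹(A[−φ₀,φ₀])` and `I₂ = ζ_H⁻¹(A[ψ₀,2π−ψ₀])`:
`d(H,t) ≥ sin²((ψ₀−φ₀)/2) · (1/t)λ(I₁∩(0,t)) · (1/t)λ(I₂∩(0,t))`. -/
theorem stmt10 (h₁ h₂ h₃ : ℝ → ℝ)
    (hmeas : Measurable h₁ ∧ Measurable h₂ ∧ Measurable h₃)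
    (hae : ∀ᵐ s ∂(volume.restrict (Ioi (0:ℝ))),
      0 ≤ h₁ s ∧ 0 ≤ h₂ s ∧ h₃ s ^ 2 ≤ h₁ s * h₂ s ∧ h₁ s + h₂ s = 1)
    (hm : ∀ t > (0:ℝ), (0 < ∫ s in Ioo 0 t, h₁ s) ∧ (0 < ∫ s in Ioo 0 t, h₂ s))
    (φ₀ ψ₀ : ℝ) (h0 : 0 ≤ φ₀) (hlt : φ₀ < ψ₀) (hπ : ψ₀ ≤ π) :
    ∀ t > (0:ℝ),
      Real.sin ((ψ₀ - φ₀) / 2) ^ 2 *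
        (1 / t * (volume (zetaH h₁ h₂ h₃ ⁻¹' arcSet (-φ₀) φ₀ ∩ Ioo 0 t)).toReal) *
        (1 / t * (volume (zetaH h₁ h₂ h₃ ⁻¹' arcSet ψ₀ (2 * π - ψ₀) ∩ Ioo 0 t)).toReal) ≤
      dH h₁ h₂ h₃ t := by
  obtain ⟨hm₁, hm₂, -⟩ := hmeas
  intro t ht
  set μ := volume.restrict (Ioo 0 t)
  set I₁ := zetaH h₁ h₂ h₃ ⁻¹' arcSet (-φ₀) φ₀
  set I₂ := zetaH h₁ h₂ h₃ ⁻¹' arcSet ψ₀ (2 * π - ψ₀)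
  have hH : ∀ᵐ s ∂μ, IsTraceNormalizedAt h₁ h₂ h₃ s :=
    (ae_restrict_of_ae_restrict_of_subset Ioo_subset_Ioi_self hae).mono fun s hs =>
      ⟨hs.1, hs.2.1, hs.2.2.1, hs.2.2.2⟩
  have hsum : (∫ s in Ioo 0 t, h₁ s) + ∫ s in Ioo 0 t, h₂ s = t := by
    rw [integral_add_integral_eq_measureReal_univ hm₁.aemeasurable hm₂.aemeasurable hH]
    simp [μ, ht.le]
  have hI₁ := measureReal_zetaH_preimage_arcSet_neg_le hH (φ₀ := φ₀) (by linarith)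
  have hI₂ := measureReal_le_zetaH_preimage_arcSet hH (ψ₀ := ψ₀) (by linarith)
  rw [measureReal_restrict_apply' measurableSet_Ioo] at hI₁ hI₂
  have hdet := sin_sq_mul_measureReal_le hm₁.aemeasurable hm₂ hH (a := φ₀ / 2) (b := ψ₀ / 2)
    (by linarith) (by linarith) (by linarith)
  rw [← sub_div] at hdet
  calc _ = sin ((ψ₀ - φ₀) / 2) ^ 2 *
        (volume.real (I₁ ∩ Ioo 0 t) * volume.real (I₂ ∩ Ioo 0 t)) / t ^ 2 := by
        simp only [measureReal_def]; ring
    _ ≤ sin ((ψ₀ - φ₀) / 2) ^ 2 * (μ.real {s | h₂ s ≤ sin (φ₀ / 2) ^ 2} *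
          μ.real {s | sin (ψ₀ / 2) ^ 2 ≤ h₂ s}) / t ^ 2 := by gcongr
    _ ≤ dH h₁ h₂ h₃ t := by
        have := div_add_sq_le_of_le_two_mul_sub (by positivity) (hm t ht).1 (hm t ht).2 hdet
        rwa [hsum] at this
end

section
/- Let H be a trace-normalised Hamiltonian on (0,∞) whose diagonal entries do not vanish a.e. near 0. For every pair of closed disjoint subsets A, B of the unit circle 𝕋 there exists a constant c(A,B) > 0, independent of H, such that for all t > 0: (1/t)λ((0,t) ∩ ζ_H^{-1}(A)) · (1/t)λ((0,t) ∩ ζ_H^{-1}(B)) ≤ c(A,B) · d(H,t). -/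
/-!
`det` is a quadratic form on symmetric `2 × 2` matrices, so `det M(t) = ∫∫ B(H(s), H(u)) ds du`
with `B` its polarisation. Writing `H = (I + W) / 2` with `W = [[x, y], [y, -x]]` gives
`4 B(H(s), H(u)) = 1 - ⟪w(s), w(u)⟫` for `w = (x, y) = (h₁ - h₂, 2 h₃)`, and `w` is `ζ_H` with its
imaginary part shrunk towards `0`. Hence `B(H(s), H(u)) ≥ |ζ_H(s) - ζ_H(u)|² / 16`, which is at
least `dist(A, B)² / 16` whenever `ζ_H(s) ∈ A` and `ζ_H(u) ∈ B`. Integrating over such pairs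
bounds `det M(t)` from below by `dist(A, B)² / 16` times the product of the two measures, and
`4 m₁ m₂ ≤ (m₁ + m₂)² = t²` turns this into the claim.
-/

open MeasureTheory Set Real

def IsHamiltonianAt {α : Type*} (h₁ h₂ h₃ : α → ℝ) (s : α) : Prop :=
  0 ≤ h₁ s ∧ 0 ≤ h₂ s ∧ h₃ s ^ 2 ≤ h₁ s * h₂ s ∧ h₁ s + h₂ s = 1

lemma IsHamiltonianAt.abs_le_one {α : Type*} {h₁ h₂ h₃ : α → ℝ} {s : α}
    (hs : IsHamiltonianAt h₁ h₂ h₃ s) :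
    |h₁ s| ≤ 1 ∧ |h₂ s| ≤ 1 ∧ |h₃ s| ≤ 1 := by
  obtain ⟨h₁0, h₂0, hdet, htr⟩ := hs
  refine ⟨abs_le.2 ⟨by linarith, by linarith⟩, abs_le.2 ⟨by linarith, by linarith⟩, ?_⟩
  rw [← sq_le_one_iff_abs_le_one]
  nlinarith

/-- The symmetric bilinear form polarising `det` on symmetric `2 × 2` matrices, evaluated at
`H(s)` and `H(u)`; in particular `detPairing h₁ h₂ h₃ s s = det H(s)`. -/
noncomputable def detPairing {α : Type*} (h₁ h₂ h₃ : α → ℝ) (s u : α) : ℝ :=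
  (h₁ s * h₂ u + h₂ s * h₁ u) / 2 - h₃ s * h₃ u

lemma exists_mem_Icc_eq_mul_of_sq_le {y c : ℝ} (hsq : y ^ 2 ≤ c ^ 2) (hyc : 0 ≤ y * c) :
    ∃ α ∈ Icc (0 : ℝ) 1, y = α * c := by
  rcases eq_or_ne c 0 with rfl | hc
  · exact ⟨0, left_mem_Icc.2 zero_le_one, by nlinarith⟩
  have hα : 0 ≤ y / c := by
    rw [← mul_div_mul_right y c hc]
    exact div_nonneg hyc (mul_self_nonneg c)
  refine ⟨y / c, ⟨hα, (pow_le_one_iff_of_nonneg hα two_ne_zero).1 ?_⟩, (div_mul_cancel₀ y hc).symm⟩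
  rwa [div_pow, div_le_one (by positivity)]

/-- The right-hand side is affine in `α * β ∈ [0, 1]` (where `y = α * z.im`, `y' = β * w.im`); it
is `2 * dist z w ^ 2` at `1` and at least `dist z w ^ 2` at `0` by Cauchy–Schwarz. -/
lemma Complex.dist_sq_le_of_norm_eq_one {z w : ℂ} (hz : ‖z‖ = 1) (hw : ‖w‖ = 1) {y y' : ℝ}
    (hy : y ^ 2 ≤ z.im ^ 2) (hyz : 0 ≤ y * z.im) (hy' : y' ^ 2 ≤ w.im ^ 2)
    (hyw : 0 ≤ y' * w.im) :
    dist z w ^ 2 ≤ 4 * (1 - z.re * w.re - y * y') := by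
  obtain ⟨α, ⟨hα0, hα1⟩, rfl⟩ := exists_mem_Icc_eq_mul_of_sq_le hy hyz
  obtain ⟨β, ⟨hβ0, hβ1⟩, rfl⟩ := exists_mem_Icc_eq_mul_of_sq_le hy' hyw
  have hz' : z.re ^ 2 + z.im ^ 2 = 1 := by
    rw [← sq_norm_sub_sq_re, hz]; ring
  have hw' : w.re ^ 2 + w.im ^ 2 = 1 := by
    rw [← sq_norm_sub_sq_re, hw]; ring
  have hdist : dist z w ^ 2 = (z.re - w.re) ^ 2 + (z.im - w.im) ^ 2 := by
    rw [dist_eq, Complex.sq_norm, normSq_apply]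
    simp only [sub_re, sub_im]
    ring
  have hαβ0 : 0 ≤ α * β := mul_nonneg hα0 hβ0
  have hαβ1 : α * β ≤ 1 := mul_le_one₀ hα1 hβ0 hβ1
  rw [hdist]
  nlinarith [mul_nonneg hαβ0 (sq_nonneg (z.re - w.re)), mul_nonneg hαβ0 (sq_nonneg (z.im - w.im)),
    mul_nonneg (sub_nonneg.2 hαβ1) (sq_nonneg (z.re - w.re)),
    mul_nonneg (sub_nonneg.2 hαβ1) (sq_nonneg (z.im + w.im))]

lemma norm_zetaH (h₁ h₂ h₃ : ℝ → ℝ) (s : ℝ) : ‖zetaH h₁ h₂ h₃ s‖ = 1 :=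
  Complex.norm_exp_ofReal_mul_I _

namespace IsHamiltonianAt

variable {h₁ h₂ h₃ : ℝ → ℝ} {s u : ℝ}

lemma h₃_eq_zero_of_h₂_eq_zero (hs : IsHamiltonianAt h₁ h₂ h₃ s) (h₂0 : h₂ s = 0) : h₃ s = 0 := by
  obtain ⟨-, -, hdet, -⟩ := hs
  rw [h₂0, mul_zero] at hdet
  exact pow_eq_zero_iff two_ne_zero |>.1 (le_antisymm hdet (sq_nonneg _))

lemma sin_phiH (hs : IsHamiltonianAt h₁ h₂ h₃ s) : sin (phiH h₁ h₂ h₃ s) = √(h₂ s) := by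
  obtain ⟨h₁0, h₂0, -, htr⟩ := hs
  by_cases hne : h₂ s = 0
  · simp [phiH, hne]
  have hx : 1 + √(h₁ s / h₂ s) ^ 2 = (h₂ s)⁻¹ := by
    rw [sq_sqrt (div_nonneg h₁0 h₂0)]
    field_simp
    linarith
  have key : sin (π / 2 - arctan √(h₁ s / h₂ s)) = √(h₂ s) := by
    rw [sin_pi_div_two_sub, cos_arctan, hx, sqrt_inv, one_div, inv_inv]
  rw [phiH, if_pos hne]
  split_ifs
  exacts [key, (sin_pi_sub _).trans key]

lemma mul_cos_phiH_nonneg (hs : IsHamiltonianAt h₁ h₂ h₃ s) :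
    0 ≤ h₃ s * cos (phiH h₁ h₂ h₃ s) := by
  unfold phiH
  split_ifs with hne h₃0
  · rw [cos_pi_div_two_sub, sin_arctan]
    positivity
  · rw [cos_pi_sub, cos_pi_div_two_sub, sin_arctan]
    have : 0 ≤ √(h₁ s / h₂ s) / √(1 + √(h₁ s / h₂ s) ^ 2) := by positivity
    nlinarith
  · simp [hs.h₃_eq_zero_of_h₂_eq_zero (not_not.1 hne)]

lemma re_zetaH (hs : IsHamiltonianAt h₁ h₂ h₃ s) : (zetaH h₁ h₂ h₃ s).re = h₁ s - h₂ s := by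
  rw [zetaH, Complex.exp_ofReal_mul_I_re, cos_two_mul, cos_sq', hs.sin_phiH, sq_sqrt hs.2.1]
  linarith [hs.2.2.2]

lemma im_zetaH (hs : IsHamiltonianAt h₁ h₂ h₃ s) :
    (zetaH h₁ h₂ h₃ s).im = 2 * √(h₂ s) * cos (phiH h₁ h₂ h₃ s) := by
  rw [zetaH, Complex.exp_ofReal_mul_I_im, sin_two_mul, hs.sin_phiH]

lemma sq_le_im_zetaH_sq (hs : IsHamiltonianAt h₁ h₂ h₃ s) :
    (2 * h₃ s) ^ 2 ≤ (zetaH h₁ h₂ h₃ s).im ^ 2 := by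
  rw [hs.im_zetaH, mul_pow, mul_pow, mul_pow, sq_sqrt hs.2.1, cos_sq', hs.sin_phiH, sq_sqrt hs.2.1]
  have hdet := hs.2.2.1
  rw [show h₁ s = 1 - h₂ s by linarith [hs.2.2.2]] at hdet
  linarith

lemma mul_im_zetaH_nonneg (hs : IsHamiltonianAt h₁ h₂ h₃ s) :
    0 ≤ 2 * h₃ s * (zetaH h₁ h₂ h₃ s).im := by
  rw [hs.im_zetaH]
  nlinarith [mul_nonneg (sqrt_nonneg (h₂ s)) hs.mul_cos_phiH_nonneg]

lemma dist_zetaH_sq_le (hs : IsHamiltonianAt h₁ h₂ h₃ s) (hu : IsHamiltonianAt h₁ h₂ h₃ u) :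
    dist (zetaH h₁ h₂ h₃ s) (zetaH h₁ h₂ h₃ u) ^ 2 ≤ 16 * detPairing h₁ h₂ h₃ s u := by
  have := Complex.dist_sq_le_of_norm_eq_one (norm_zetaH h₁ h₂ h₃ s) (norm_zetaH h₁ h₂ h₃ u)
    hs.sq_le_im_zetaH_sq hs.mul_im_zetaH_nonneg hu.sq_le_im_zetaH_sq hu.mul_im_zetaH_nonneg
  rw [hs.re_zetaH, hu.re_zetaH] at this
  refine this.trans_eq ?_
  unfold detPairing
  linear_combination (-4 * (h₁ u + h₂ u)) * hs.2.2.2 - 4 * hu.2.2.2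

lemma detPairing_nonneg (hs : IsHamiltonianAt h₁ h₂ h₃ s) (hu : IsHamiltonianAt h₁ h₂ h₃ u) :
    0 ≤ detPairing h₁ h₂ h₃ s u := by
  nlinarith [hs.dist_zetaH_sq_le hu, sq_nonneg (dist (zetaH h₁ h₂ h₃ s) (zetaH h₁ h₂ h₃ u))]

end IsHamiltonianAt

section Integration

variable {α : Type*} [MeasurableSpace α] {μ : Measure α} {h₁ h₂ h₃ : α → ℝ}

lemma integrable_of_ae_isHamiltonianAt [IsFiniteMeasure μ] (hm₁ : AEStronglyMeasurable h₁ μ)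
    (hm₂ : AEStronglyMeasurable h₂ μ) (hm₃ : AEStronglyMeasurable h₃ μ)
    (hae : ∀ᵐ s ∂μ, IsHamiltonianAt h₁ h₂ h₃ s) :
    Integrable h₁ μ ∧ Integrable h₂ μ ∧ Integrable h₃ μ :=
  ⟨Integrable.of_bound hm₁ 1 <| hae.mono fun _ hs => hs.abs_le_one.1,
    Integrable.of_bound hm₂ 1 <| hae.mono fun _ hs => hs.abs_le_one.2.1,
    Integrable.of_bound hm₃ 1 <| hae.mono fun _ hs => hs.abs_le_one.2.2⟩

lemma integral_add_integral_eq_measureReal_univ_s11 (hi₁ : Integrable h₁ μ) (hi₂ : Integrable h₂ μ)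
    (hae : ∀ᵐ s ∂μ, IsHamiltonianAt h₁ h₂ h₃ s) :
    ∫ s, h₁ s ∂μ + ∫ s, h₂ s ∂μ = μ.real univ := by
  rw [← integral_add hi₁ hi₂, integral_congr_ae (hae.mono fun _ hs => hs.2.2.2),
    integral_const, smul_eq_mul, mul_one]

lemma integrable_detPairing (hi₁ : Integrable h₁ μ) (hi₂ : Integrable h₂ μ)
    (hi₃ : Integrable h₃ μ) :
    Integrable (fun z : α × α => detPairing h₁ h₂ h₃ z.1 z.2) (μ.prod μ) :=
  (((hi₁.mul_prod hi₂).add (hi₂.mul_prod hi₁)).div_const 2).sub (hi₃.mul_prod hi₃)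

variable [SFinite μ] in
lemma integral_detPairing (hi₁ : Integrable h₁ μ) (hi₂ : Integrable h₂ μ)
    (hi₃ : Integrable h₃ μ) :
    ∫ z, detPairing h₁ h₂ h₃ z.1 z.2 ∂(μ.prod μ) =
      (∫ s, h₁ s ∂μ) * (∫ s, h₂ s ∂μ) - (∫ s, h₃ s ∂μ) ^ 2 := by
  simp only [detPairing]
  rw [integral_sub ?_ (hi₃.mul_prod hi₃), integral_div, integral_add (hi₁.mul_prod hi₂)
    (hi₂.mul_prod hi₁), integral_prod_mul, integral_prod_mul, integral_prod_mul]
  · ring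
  · exact ((hi₁.mul_prod hi₂).add (hi₂.mul_prod hi₁)).div_const 2

end Integration

lemma mul_measureReal_le_integral {β : Type*} [MeasurableSpace β] {ν : Measure β} {f : β → ℝ}
    {S : Set β} {κ : ℝ} (hS : MeasurableSet S) (hνS : ν S ≠ ⊤) (hf : Integrable f ν)
    (hf0 : 0 ≤ᵐ[ν] f) (hκ : ∀ᵐ x ∂ν, x ∈ S → κ ≤ f x) :
    κ * ν.real S ≤ ∫ x, f x ∂ν :=
  calc κ * ν.real S = ∫ _ in S, κ ∂ν := by rw [setIntegral_const, smul_eq_mul, mul_comm]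
    _ ≤ ∫ x in S, f x ∂ν :=
      integral_mono_ae (integrableOn_const hνS) hf.integrableOn ((ae_restrict_iff' hS).2 hκ)
    _ ≤ ∫ x, f x ∂ν := setIntegral_le_integral hf hf0

lemma measurable_zetaH {h₁ h₂ h₃ : ℝ → ℝ} (hm₁ : Measurable h₁) (hm₂ : Measurable h₂)
    (hm₃ : Measurable h₃) : Measurable (zetaH h₁ h₂ h₃) := by
  have harc : Measurable fun s => π / 2 - arctan √(h₁ s / h₂ s) :=
    measurable_const.sub (continuous_arctan.measurable.comp (hm₁.div hm₂).sqrt)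
  have hφ : Measurable (phiH h₁ h₂ h₃) :=
    Measurable.ite (hm₂ (measurableSet_singleton 0)).compl
      (Measurable.ite (hm₃ measurableSet_Ici) harc (measurable_const.sub harc)) measurable_const
  exact Complex.measurable_exp.comp
    ((Complex.measurable_ofReal.comp (hφ.const_mul 2)).mul_const Complex.I)

theorem mul_measureReal_preimage_zetaH_le {μ : Measure ℝ} [IsFiniteMeasure μ]
    {h₁ h₂ h₃ : ℝ → ℝ} (hm₁ : Measurable h₁) (hm₂ : Measurable h₂) (hm₃ : Measurable h₃)
    (hae : ∀ᵐ s ∂μ, IsHamiltonianAt h₁ h₂ h₃ s) {A B : Set ℂ} (hA : MeasurableSet A)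
    (hB : MeasurableSet B) {δ : ℝ} (hδ : 0 ≤ δ) (hsep : ∀ a ∈ A, ∀ b ∈ B, δ ≤ dist a b) :
    δ ^ 2 / 16 * (μ.real (zetaH h₁ h₂ h₃ ⁻¹' A) * μ.real (zetaH h₁ h₂ h₃ ⁻¹' B)) ≤
      (∫ s, h₁ s ∂μ) * (∫ s, h₂ s ∂μ) - (∫ s, h₃ s ∂μ) ^ 2 := by
  obtain ⟨hi₁, hi₂, hi₃⟩ := integrable_of_ae_isHamiltonianAt hm₁.aestronglyMeasurable
    hm₂.aestronglyMeasurable hm₃.aestronglyMeasurable hae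
  have hζ := measurable_zetaH hm₁ hm₂ hm₃
  have hae₂ : ∀ᵐ z ∂(μ.prod μ), IsHamiltonianAt h₁ h₂ h₃ z.1 ∧ IsHamiltonianAt h₁ h₂ h₃ z.2 :=
    (Measure.quasiMeasurePreserving_fst.ae hae).and (Measure.quasiMeasurePreserving_snd.ae hae)
  rw [← measureReal_prod_prod, ← integral_detPairing hi₁ hi₂ hi₃]
  refine mul_measureReal_le_integral ((hζ hA).prod (hζ hB)) (measure_ne_top _ _)
    (integrable_detPairing hi₁ hi₂ hi₃) (hae₂.mono fun z hz => hz.1.detPairing_nonneg hz.2)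
    (hae₂.mono fun z hz hzAB => ?_)
  have hδ_sq := pow_le_pow_left₀ hδ (hsep _ hzAB.1 _ hzAB.2) 2
  linarith [hz.1.dist_zetaH_sq_le hz.2]

lemma exists_pos_le_dist_of_isCompact {X : Type*} [PseudoMetricSpace X] {s t : Set X}
    (hs : IsCompact s) (ht : IsClosed t) (hst : Disjoint s t) :
    ∃ δ > (0 : ℝ), ∀ x ∈ s, ∀ y ∈ t, δ ≤ dist x y := by
  obtain ⟨r, hr, h⟩ := Metric.exists_pos_forall_lt_edist hs ht hst
  refine ⟨r, hr, fun x hx y hy => ?_⟩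
  have hxy := h x hx y hy
  rw [edist_nndist, ENNReal.coe_lt_coe] at hxy
  exact hxy.le

lemma div_mul_div_le_of_add_eq {κ a b m₁ m₂ t D : ℝ} (hκ : 0 < κ) (ha : 0 ≤ a) (hb : 0 ≤ b)
    (hm₁ : 0 < m₁) (hm₂ : 0 < m₂) (ht : m₁ + m₂ = t) (h : κ * (a * b) ≤ D) :
    1 / t * a * (1 / t * b) ≤ (4 * κ)⁻¹ * (D / (m₁ * m₂)) := by
  subst ht
  have hD : 0 ≤ D := le_trans (by positivity) h
  calc 1 / (m₁ + m₂) * a * (1 / (m₁ + m₂) * b) = κ * (a * b) / (κ * (m₁ + m₂) ^ 2) := by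
        field_simp
    _ ≤ D / (4 * κ * (m₁ * m₂)) :=
        div_le_div₀ hD h (by positivity) (by nlinarith [mul_nonneg hκ.le (sq_nonneg (m₁ - m₂))])
    _ = (4 * κ)⁻¹ * (D / (m₁ * m₂)) := by field_simp

theorem stmt11_general (A B : Set ℂ) (hA : IsClosed A) (hB : IsClosed B)
    (hAT : A ⊆ Metric.sphere (0:ℂ) 1)
    (hdisj : Disjoint A B) :
    ∃ c > (0:ℝ), ∀ h₁ h₂ h₃ : ℝ → ℝ,
      (Measurable h₁ ∧ Measurable h₂ ∧ Measurable h₃) →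
      (∀ᵐ s ∂(volume.restrict (Ioi (0:ℝ))),
        0 ≤ h₁ s ∧ 0 ≤ h₂ s ∧ h₃ s ^ 2 ≤ h₁ s * h₂ s ∧ h₁ s + h₂ s = 1) →
      (∀ ε > (0:ℝ), volume {s ∈ Ioo 0 ε | h₁ s ≠ 0} ≠ 0 ∧
        volume {s ∈ Ioo 0 ε | h₂ s ≠ 0} ≠ 0) →
      (∀ t > (0:ℝ), (0 < ∫ s in Ioo 0 t, h₁ s) ∧ (0 < ∫ s in Ioo 0 t, h₂ s)) →
      ∀ t > (0:ℝ),
        (1 / t * (volume (Ioo 0 t ∩ zetaH h₁ h₂ h₃ ⁻¹' A)).toReal) *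
          (1 / t * (volume (Ioo 0 t ∩ zetaH h₁ h₂ h₃ ⁻¹' B)).toReal) ≤
        c * dH h₁ h₂ h₃ t := by
  obtain ⟨δ, hδ, hsep⟩ := exists_pos_le_dist_of_isCompact
    (Metric.isCompact_of_isClosed_isBounded hA (Metric.isBounded_sphere.subset hAT)) hB hdisj
  refine ⟨(4 * (δ ^ 2 / 16))⁻¹, by positivity, ?_⟩
  rintro h₁ h₂ h₃ ⟨hm₁, hm₂, hm₃⟩ hae - hpos t ht
  have haeI : ∀ᵐ s ∂(volume.restrict (Ioo 0 t)), IsHamiltonianAt h₁ h₂ h₃ s :=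
    ae_restrict_of_ae_restrict_of_subset Ioo_subset_Ioi_self hae
  obtain ⟨hi₁, hi₂, -⟩ := integrable_of_ae_isHamiltonianAt hm₁.aestronglyMeasurable
    hm₂.aestronglyMeasurable hm₃.aestronglyMeasurable haeI
  have htr : (∫ s in Ioo 0 t, h₁ s) + ∫ s in Ioo 0 t, h₂ s = t := by
    rw [integral_add_integral_eq_measureReal_univ_s11 hi₁ hi₂ haeI, measureReal_restrict_apply_univ,
      volume_real_Ioo_of_le ht.le, sub_zero]
  have hdet := mul_measureReal_preimage_zetaH_le hm₁ hm₂ hm₃ haeI hA.measurableSet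
    hB.measurableSet hδ.le hsep
  have hζ := measurable_zetaH hm₁ hm₂ hm₃
  rw [measureReal_restrict_apply (hζ hA.measurableSet),
    measureReal_restrict_apply (hζ hB.measurableSet), inter_comm, inter_comm _ (Ioo 0 t)] at hdet
  exact div_mul_div_le_of_add_eq (by positivity) ENNReal.toReal_nonneg ENNReal.toReal_nonneg
    (hpos t ht).1 (hpos t ht).2 htr hdet

/-- For every pair of closed disjoint subsets `A, B` of the unit circle there is a constant
`c(A,B) > 0`, independent of the Hamiltonian, with
`(1/t)λ((0,t)∩ζ_H⁻¹(A)) · (1/t)λ((0,t)∩ζ_H⁻¹(B)) ≤ c(A,B)·d(H,t)` for all `t > 0`. -/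
theorem stmt11 (A B : Set ℂ) (hA : IsClosed A) (hB : IsClosed B)
    (hAT : A ⊆ Metric.sphere (0:ℂ) 1) (hBT : B ⊆ Metric.sphere (0:ℂ) 1)
    (hdisj : Disjoint A B) :
    ∃ c > (0:ℝ), ∀ h₁ h₂ h₃ : ℝ → ℝ,
      (Measurable h₁ ∧ Measurable h₂ ∧ Measurable h₃) →
      (∀ᵐ s ∂(volume.restrict (Ioi (0:ℝ))),
        0 ≤ h₁ s ∧ 0 ≤ h₂ s ∧ h₃ s ^ 2 ≤ h₁ s * h₂ s ∧ h₁ s + h₂ s = 1) →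
      (∀ ε > (0:ℝ), volume {s ∈ Ioo 0 ε | h₁ s ≠ 0} ≠ 0 ∧
        volume {s ∈ Ioo 0 ε | h₂ s ≠ 0} ≠ 0) →
      (∀ t > (0:ℝ), (0 < ∫ s in Ioo 0 t, h₁ s) ∧ (0 < ∫ s in Ioo 0 t, h₂ s)) →
      ∀ t > (0:ℝ),
        (1 / t * (volume (Ioo 0 t ∩ zetaH h₁ h₂ h₃ ⁻¹' A)).toReal) *
          (1 / t * (volume (Ioo 0 t ∩ zetaH h₁ h₂ h₃ ⁻¹' B)).toReal) ≤
        c * dH h₁ h₂ h₃ t :=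
  stmt11_general A B hA hB hAT hdisj
end

section
/- Let h₁, h₂ : (0,∞) → (0,∞) be regularly varying at 0 with the same index α > −1, and set h₃ = √(h₁h₂). Let m_i(t) = ∫₀ᵗ h_i, i = 1,2,3. Then lim_{t→0} (m₁(t)m₂(t) − m₃(t)²)/(m₁(t)m₂(t)) = 0. -/
open MeasureTheory Set Filter Topology Real

/-!
By Karamata's theorem `mᵢ(t) ∼ t hᵢ(t) / (α + 1)` for `i = 1, 2, 3` (`h₃` is regularly
varying with index `α` too), so `m₃(t)² / (m₁(t) m₂(t)) → 1`.

Karamata's theorem: substituting `x = t u`, `m(t) / (t h(t)) = ∫₀¹ h(t u) / h(t) du`, and the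
integrand tends to `u ^ α`. Dominated convergence applies thanks to Potter's bound
`h(t u) / h(t) ≤ C u ^ (α - η)`, which comes from the uniform convergence theorem for the
additively slowly varying function `x ↦ log h(e⁻ˣ) + α x`; the uniform convergence theorem itself
is proved by the Csiszár–Erdős measure argument.
-/

lemma nonempty_inter_of_measure_lt_add₀ {Ω : Type*} [MeasurableSpace Ω] (μ : Measure Ω)
    {s t u : Set Ω} (ht : NullMeasurableSet t μ) (h's : s ⊆ u) (h't : t ⊆ u)
    (h : μ u < μ s + μ t) : (s ∩ t).Nonempty := by
  rw [← not_disjoint_iff_nonempty_inter]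
  contrapose! h
  calc μ s + μ t = μ (s ∪ t) := (measure_union₀ ht h.aedisjoint).symm
    _ ≤ μ u := measure_mono (union_subset h's h't)

section UniformConvergence

variable {w : ℝ → ℝ}

def stableShifts (w : ℝ → ℝ) (V : ℕ → ℝ) (ε : ℝ) (n : ℕ) : Set ℝ :=
  {y | ∀ m ≥ n, |w (V m + y) - w (V m)| ≤ ε}

lemma stableShifts_mono (w : ℝ → ℝ) (V : ℕ → ℝ) (ε : ℝ) : Monotone (stableShifts w V ε) :=
  fun _ _ hab _ hy m hm => hy m (hab.trans hm)

lemma nullMeasurableSet_stableShifts (hw : AEMeasurable w) (V : ℕ → ℝ) (ε : ℝ) (n : ℕ) :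
    NullMeasurableSet (stableShifts w V ε n) := by
  simp only [stableShifts, Set.ofPred_forall]
  refine .iInter fun m => .iInter fun _ => ?_
  have hshift : AEMeasurable (fun y => w (V m + y)) :=
    hw.comp_quasiMeasurePreserving
      (measurePreserving_add_left volume (V m)).quasiMeasurePreserving
  exact ((hshift.sub_const _).norm).nullMeasurable measurableSet_Iic

lemma iUnion_stableShifts (hconv : ∀ y, Tendsto (fun x => w (x + y) - w x) atTop (𝓝 0))
    {V : ℕ → ℝ} (hV : Tendsto V atTop atTop) {ε : ℝ} (hε : 0 < ε) :
    ⋃ n, stableShifts w V ε n = univ := by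
  refine eq_univ_of_forall fun y => mem_iUnion.2 ?_
  have hsmall := ((hconv y).comp hV).eventually (Metric.closedBall_mem_nhds 0 hε)
  obtain ⟨n, hn⟩ := eventually_atTop.1 hsmall
  exact ⟨n, fun m hm => by simpa [Real.dist_eq] using hn m hm⟩

lemma eventually_lt_volume_inter_stableShifts
    (hconv : ∀ y, Tendsto (fun x => w (x + y) - w x) atTop (𝓝 0))
    {V : ℕ → ℝ} (hV : Tendsto V atTop atTop) {ε : ℝ} (hε : 0 < ε) {S : Set ℝ}
    {c : ENNReal} (hc : c < volume S) :
    ∀ᶠ n in atTop, c < volume (S ∩ stableShifts w V ε n) := by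
  have hmono : Monotone fun n => S ∩ stableShifts w V ε n :=
    fun _ _ hab => inter_subset_inter_right S (stableShifts_mono w V ε hab)
  have hlim := tendsto_measure_iUnion_atTop (μ := volume) hmono
  rw [← inter_iUnion, iUnion_stableShifts hconv hV hε, inter_univ] at hlim
  exact hlim.eventually (lt_mem_nhds hc)

/-- The uniform convergence theorem for slowly varying functions, in additive form. -/
theorem eventually_forall_Icc_abs_sub_le (hw : AEMeasurable w)
    (hconv : ∀ y, Tendsto (fun x => w (x + y) - w x) atTop (𝓝 0)) {ε L : ℝ} (hε : 0 < ε)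
    (hL : 0 < L) : ∀ᶠ x in atTop, ∀ y ∈ Icc 0 L, |w (x + y) - w x| ≤ ε := by
  by_contra hcon
  have hbad : ∀ n : ℕ, ∃ x ≥ (n : ℝ), ∃ y ∈ Icc 0 L, ε < |w (x + y) - w x| := fun n => by
    simpa [and_assoc] using frequently_atTop.1 (not_eventually.1 hcon) n
  choose X hX Y hY hgt using hbad
  have hXtop : Tendsto X atTop atTop := tendsto_atTop_mono hX tendsto_natCast_atTop_atTop
  have hZtop : Tendsto (fun n => X n + Y n) atTop atTop :=
    tendsto_atTop_mono (fun n => le_add_of_nonneg_right (hY n).1) hXtop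
  have hvol : ENNReal.ofReal (3 * L / 2) < volume (Icc (0 : ℝ) (2 * L)) := by
    rw [Real.volume_Icc]
    exact ENNReal.ofReal_lt_ofReal_iff (by linarith) |>.2 (by linarith)
  have hε3 : 0 < ε / 3 := by positivity
  obtain ⟨n, hA, hB⟩ := ((eventually_lt_volume_inter_stableShifts hconv hXtop hε3 hvol).and
    (eventually_lt_volume_inter_stableShifts hconv hZtop hε3 hvol)).exists
  -- Both sets of good shifts lie in `[0, 3L]` and fill more than half of it, so they share a `y`,
  -- through which `w (X n + Y n) - w (X n)` splits into two increments of size at most `ε / 3`.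
  obtain ⟨y, hyZ, hyX⟩ := nonempty_inter_of_measure_lt_add₀ volume
    (s := (· + -Y n) ⁻¹' (Icc 0 (2 * L) ∩ stableShifts w (fun n => X n + Y n) (ε / 3) n))
    (t := Icc 0 (2 * L) ∩ stableShifts w X (ε / 3) n) (u := Icc 0 (3 * L))
    (measurableSet_Icc.nullMeasurableSet.inter (nullMeasurableSet_stableShifts hw _ _ _))
    (fun y hy => by
      have := hY n
      simp only [mem_preimage, mem_inter_iff, mem_Icc] at hy this ⊢
      constructor <;> linarith)
    (fun y hy => by simp only [mem_inter_iff, mem_Icc] at hy ⊢; constructor <;> linarith)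
    (by
      rw [measure_preimage_add_right, Real.volume_Icc, sub_zero]
      calc ENNReal.ofReal (3 * L)
          = ENNReal.ofReal (3 * L / 2) + ENNReal.ofReal (3 * L / 2) := by
            rw [← ENNReal.ofReal_add (by linarith) (by linarith)]; ring_nf
        _ < _ := ENNReal.add_lt_add hB hA)
  have h₁ : |w (X n + y) - w (X n)| ≤ ε / 3 := hyX.2 n le_rfl
  have h₂ : |w (X n + y) - w (X n + Y n)| ≤ ε / 3 := by
    simpa [add_assoc] using hyZ.2 n le_rfl
  have := hgt n
  rw [abs_le] at h₁ h₂
  rw [lt_abs] at this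
  rcases this with h | h <;> linarith [h₁.1, h₁.2, h₂.1, h₂.2]

end UniformConvergence

lemma apply_add_natCast_mul_le_of_forall_Icc {f : ℝ → ℝ} {x₀ B : ℝ}
    (hf : ∀ x ≥ x₀, ∀ y ∈ Icc (0 : ℝ) 1, f (x + y) ≤ f x + B) (n : ℕ) :
    ∀ x ≥ x₀, ∀ z ∈ Icc (0 : ℝ) 1, f (x + n * z) ≤ f x + n * B := by
  induction n with
  | zero => simp
  | succ n ih =>
    intro x hx z hz
    have hxn : x₀ ≤ x + n * z := le_add_of_le_of_nonneg hx (by have := hz.1; positivity)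
    calc f (x + (n + 1 : ℕ) * z) = f (x + n * z + z) := by push_cast; ring_nf
      _ ≤ f (x + n * z) + B := hf _ hxn z hz
      _ ≤ f x + (n + 1 : ℕ) * B := by push_cast; linarith [ih x hx z hz]

lemma apply_add_le_add_mul_of_forall_Icc {f : ℝ → ℝ} {x₀ B : ℝ} (hB : 0 ≤ B)
    (hf : ∀ x ≥ x₀, ∀ y ∈ Icc (0 : ℝ) 1, f (x + y) ≤ f x + B) {x y : ℝ} (hx : x₀ ≤ x)
    (hy : 0 ≤ y) : f (x + y) ≤ f x + (y + 1) * B := by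
  set n := ⌈y⌉₊
  have hny : n * (y / n) = y := by
    rcases eq_or_ne n 0 with hn | hn
    · simp [hn, le_antisymm (Nat.ceil_eq_zero.1 hn) hy]
    · exact mul_div_cancel₀ y (Nat.cast_ne_zero.2 hn)
  have hz : y / n ∈ Icc (0 : ℝ) 1 :=
    ⟨by positivity, div_le_one_of_le₀ (Nat.le_ceil y) (Nat.cast_nonneg n)⟩
  calc f (x + y) = f (x + n * (y / n)) := by rw [hny]
    _ ≤ f x + n * B := apply_add_natCast_mul_le_of_forall_Icc hf n x hx _ hz
    _ ≤ f x + (y + 1) * B := by gcongr; exact (Nat.ceil_lt_add_one hy).le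

lemma quasiMeasurePreserving_exp_neg :
    Measure.QuasiMeasurePreserving (fun x => exp (-x)) volume (volume.restrict (Ioi 0)) := by
  refine ⟨by fun_prop, Measure.AbsolutelyContinuous.mk fun s hs hnull => ?_⟩
  rw [Measure.map_apply (by fun_prop) hs]
  rw [Measure.restrict_apply hs] at hnull
  have himage : (fun x => exp (-x)) ⁻¹' s = (fun t => -log t) '' (s ∩ Ioi 0) := by
    ext x
    refine ⟨fun hx => ⟨exp (-x), ⟨hx, exp_pos _⟩, by simp⟩, ?_⟩
    rintro ⟨t, ⟨hts, ht⟩, rfl⟩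
    simpa [exp_log ht] using hts
  rw [himage]
  refine addHaar_image_eq_zero_of_differentiableOn_of_addHaar_eq_zero volume ?_ hnull
  exact fun t ht => (differentiableAt_log (ne_of_gt ht.2)).neg.differentiableWithinAt

def IsRegularlyVaryingAtZero (h : ℝ → ℝ) (α : ℝ) : Prop :=
  ∀ t > 0, Tendsto (fun s => h (s * t) / h s) (𝓝[>] 0) (𝓝 (t ^ α))

section LogSlowPart

variable {h : ℝ → ℝ} {α : ℝ}

/-- The slowly varying part `t ↦ h t * t ^ (-α)` of `h`, in the variable `x = -log t` and on a
logarithmic scale. -/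
noncomputable def logSlowPart (h : ℝ → ℝ) (α x : ℝ) : ℝ := log (h (exp (-x))) + α * x

lemma logSlowPart_add_sub (hpos : ∀ t > 0, 0 < h t) (x y : ℝ) :
    logSlowPart h α (x + y) - logSlowPart h α x =
      log (h (exp (-x) * exp (-y)) / h (exp (-x))) + α * y := by
  rw [logSlowPart, logSlowPart,
    log_div (hpos _ (by positivity)).ne' (hpos _ (by positivity)).ne', ← exp_add, neg_add]
  ring

lemma aemeasurable_logSlowPart (hmeas : AEMeasurable h (volume.restrict (Ioi 0))) :
    AEMeasurable (logSlowPart h α) := by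
  have := hmeas.comp_quasiMeasurePreserving quasiMeasurePreserving_exp_neg
  exact (this.log).add (measurable_id.const_mul α).aemeasurable

lemma IsRegularlyVaryingAtZero.tendsto_logSlowPart_add_sub (hrv : IsRegularlyVaryingAtZero h α)
    (hpos : ∀ t > 0, 0 < h t) (y : ℝ) :
    Tendsto (fun x => logSlowPart h α (x + y) - logSlowPart h α x) atTop (𝓝 0) := by
  have hexp : Tendsto (fun x => exp (-x)) atTop (𝓝[>] 0) :=
    tendsto_nhdsWithin_iff.2 ⟨tendsto_exp_neg_atTop_nhds_zero, .of_forall fun _ => exp_pos _⟩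
  have hlog := ((continuousAt_log (rpow_pos_of_pos (exp_pos (-y)) α).ne').tendsto.comp
    ((hrv _ (exp_pos (-y))).comp hexp)).add_const (α * y)
  rw [log_rpow (exp_pos _), log_exp, mul_neg, neg_add_cancel] at hlog
  simpa only [logSlowPart_add_sub hpos, Function.comp_def] using hlog

end LogSlowPart

/-- Potter's bound. -/
theorem IsRegularlyVaryingAtZero.eventually_le_mul_rpow_mul {h : ℝ → ℝ} {α : ℝ}
    (hrv : IsRegularlyVaryingAtZero h α) (hpos : ∀ t > 0, 0 < h t)
    (hmeas : AEMeasurable h (volume.restrict (Ioi 0))) {η : ℝ} (hη : 0 < η) :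
    ∃ C, ∀ᶠ s in 𝓝[>] 0, ∀ u ∈ Ioc (0 : ℝ) 1, h (s * u) ≤ C * u ^ (α - η) * h s := by
  obtain ⟨x₀, hx₀⟩ := eventually_atTop.1 (eventually_forall_Icc_abs_sub_le
    (aemeasurable_logSlowPart hmeas) (hrv.tendsto_logSlowPart_add_sub hpos) hη one_pos)
  have hgrowth : ∀ x ≥ x₀, ∀ y ≥ 0, logSlowPart h α (x + y) - logSlowPart h α x ≤ (y + 1) * η :=
    fun x hx y hy => by
      have := apply_add_le_add_mul_of_forall_Icc (f := logSlowPart h α) hη.le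
        (fun x hx y hy => by linarith [(abs_le.1 (hx₀ x hx y hy)).2]) hx hy
      linarith
  refine ⟨exp η, ?_⟩
  filter_upwards [Ioo_mem_nhdsGT (exp_pos (-x₀))] with s hs u hu
  have hx : x₀ ≤ -log s := by
    have := log_lt_log hs.1 hs.2
    rw [log_exp] at this
    linarith
  have hy : 0 ≤ -log u := neg_nonneg.2 (log_nonpos hu.1.le hu.2)
  have hincr := logSlowPart_add_sub (α := α) hpos (-log s) (-log u)
  simp only [neg_neg, exp_log hs.1, exp_log hu.1] at hincr
  have hlog : log (h (s * u) / h s) ≤ η + log u * (α - η) := by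
    nlinarith [hgrowth _ hx _ hy]
  have hexp := exp_le_exp.2 hlog
  rwa [exp_log (div_pos (hpos _ (mul_pos hs.1 hu.1)) (hpos s hs.1)), exp_add,
    ← rpow_def_of_pos hu.1, div_le_iff₀ (hpos s hs.1)] at hexp

lemma aemeasurable_restrict_Ioi_of_integrableOn_Ioo {h : ℝ → ℝ}
    (hint : ∀ t > 0, IntegrableOn h (Ioo 0 t)) : AEMeasurable h (volume.restrict (Ioi 0)) := by
  have hcover : Ioi (0 : ℝ) = ⋃ n : ℕ, Ioo 0 ((n : ℝ) + 1) := by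
    ext x
    simp only [mem_Ioi, mem_iUnion, mem_Ioo]
    exact ⟨fun hx => ⟨⌊x⌋₊, hx, Nat.lt_floor_add_one x⟩, fun ⟨_, hx, _⟩ => hx⟩
  rw [hcover]
  exact aemeasurable_iUnion_iff.2 fun n => (hint _ (by positivity)).aemeasurable

lemma setIntegral_Ioo_zero_eq_mul (h : ℝ → ℝ) {t : ℝ} (ht : 0 < t) :
    ∫ x in Ioo 0 t, h x = t * ∫ u in Ioo 0 1, h (t * u) := by
  have := intervalIntegral.integral_comp_mul_left (a := 0) (b := 1) h ht.ne'
  rw [mul_zero, mul_one, intervalIntegral.integral_of_le zero_le_one,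
    intervalIntegral.integral_of_le ht.le, integral_Ioc_eq_integral_Ioo,
    integral_Ioc_eq_integral_Ioo, smul_eq_mul] at this
  rw [this, mul_inv_cancel_left₀ ht.ne']

lemma integrableOn_Ioo_zero_one_comp_mul {h : ℝ → ℝ} {t : ℝ} (ht : 0 < t)
    (hint : IntegrableOn h (Ioo 0 t)) : IntegrableOn (fun u => h (t * u)) (Ioo 0 1) := by
  rw [← intervalIntegrable_iff_integrableOn_Ioo_of_le ht.le] at hint
  have := hint.comp_mul_left (c := t)
  rwa [zero_div, div_self ht.ne', intervalIntegrable_iff_integrableOn_Ioo_of_le zero_le_one] at this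

lemma setIntegral_Ioo_zero_one_rpow {α : ℝ} (hα : -1 < α) :
    ∫ u in Ioo (0 : ℝ) 1, u ^ α = (α + 1)⁻¹ := by
  rw [← integral_Ioc_eq_integral_Ioo, ← intervalIntegral.integral_of_le zero_le_one,
    integral_rpow (Or.inl hα), one_rpow, zero_rpow (by linarith), sub_zero, one_div]

/-- Karamata's theorem at `0`. -/
theorem IsRegularlyVaryingAtZero.tendsto_setIntegral_div_mul {h : ℝ → ℝ} {α : ℝ}
    (hrv : IsRegularlyVaryingAtZero h α) (hα : -1 < α) (hpos : ∀ t > 0, 0 < h t)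
    (hint : ∀ t > 0, IntegrableOn h (Ioo 0 t)) :
    Tendsto (fun t => (∫ x in Ioo 0 t, h x) / (t * h t)) (𝓝[>] 0) (𝓝 (α + 1)⁻¹) := by
  -- With `η = (α + 1) / 2` the dominating function `C * u ^ (α - η)` is integrable on `(0, 1)`.
  obtain ⟨C, hC⟩ := hrv.eventually_le_mul_rpow_mul hpos
    (aemeasurable_restrict_Ioi_of_integrableOn_Ioo hint) (η := (α + 1) / 2) (by linarith)
  have hdom : Tendsto (fun t => ∫ u in Ioo 0 1, h (t * u) / h t) (𝓝[>] 0)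
      (𝓝 (∫ u in Ioo (0 : ℝ) 1, u ^ α)) := by
    refine tendsto_integral_filter_of_dominated_convergence (fun u => C * u ^ (α - (α + 1) / 2))
      ?_ ?_ ?_ ?_
    · filter_upwards [self_mem_nhdsWithin] with t ht
      exact ((integrableOn_Ioo_zero_one_comp_mul ht (hint t ht)).div_const _).aestronglyMeasurable
    · filter_upwards [hC, self_mem_nhdsWithin] with t hCt ht
      refine (ae_restrict_iff' measurableSet_Ioo).2 (.of_forall fun u hu => ?_)
      rw [Real.norm_of_nonneg (div_pos (hpos _ (mul_pos ht hu.1)) (hpos t ht)).le,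
        div_le_iff₀ (hpos t ht)]
      exact hCt u ⟨hu.1, hu.2.le⟩
    · have := intervalIntegral.intervalIntegrable_rpow' (a := 0) (b := 1)
        (r := α - (α + 1) / 2) (by linarith)
      rw [intervalIntegrable_iff_integrableOn_Ioo_of_le zero_le_one] at this
      exact this.const_mul C
    · exact (ae_restrict_iff' measurableSet_Ioo).2 (.of_forall fun u hu => hrv u hu.1)
  rw [setIntegral_Ioo_zero_one_rpow hα] at hdom
  refine hdom.congr' ?_
  filter_upwards [self_mem_nhdsWithin] with t ht
  rw [integral_div, setIntegral_Ioo_zero_eq_mul h ht, mul_div_mul_left _ _ (ne_of_gt ht)]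

lemma IsRegularlyVaryingAtZero.sqrt_mul {h₁ h₂ : ℝ → ℝ} {α β : ℝ}
    (hrv₁ : IsRegularlyVaryingAtZero h₁ α) (hrv₂ : IsRegularlyVaryingAtZero h₂ β)
    (hnonneg : ∀ t > 0, 0 ≤ h₁ t * h₂ t) :
    IsRegularlyVaryingAtZero (fun x => √(h₁ x * h₂ x)) ((α + β) / 2) := by
  intro t ht
  have hlim := ((hrv₁ t ht).mul (hrv₂ t ht)).sqrt
  rw [← Real.rpow_add ht, Real.sqrt_eq_rpow, ← Real.rpow_mul ht.le, mul_one_div] at hlim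
  refine hlim.congr' ?_
  filter_upwards [self_mem_nhdsWithin] with s hs
  rw [div_mul_div_comm, Real.sqrt_div' _ (hnonneg s hs)]

/-- If `h₁, h₂` are regularly varying at `0` with the same index `α > −1` and
`h₃ = √(h₁h₂)`, then `d(H,t) = (m₁m₂ − m₃²)/(m₁m₂) → 0` as `t → 0`. -/
theorem stmt12 (h₁ h₂ : ℝ → ℝ) (α : ℝ) (hα : -1 < α)
    (hpos : ∀ t > (0:ℝ), 0 < h₁ t ∧ 0 < h₂ t)
    (hint : ∀ t > (0:ℝ), IntegrableOn h₁ (Ioo 0 t) ∧ IntegrableOn h₂ (Ioo 0 t) ∧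
      IntegrableOn (fun x => Real.sqrt (h₁ x * h₂ x)) (Ioo 0 t))
    (hrv₁ : ∀ t > (0:ℝ), Tendsto (fun s => h₁ (s * t) / h₁ s)
      (nhdsWithin 0 (Ioi 0)) (nhds (t ^ α)))
    (hrv₂ : ∀ t > (0:ℝ), Tendsto (fun s => h₂ (s * t) / h₂ s)
      (nhdsWithin 0 (Ioi 0)) (nhds (t ^ α))) :
    Tendsto (fun t =>
        ((∫ x in Ioo 0 t, h₁ x) * (∫ x in Ioo 0 t, h₂ x) -
          (∫ x in Ioo 0 t, Real.sqrt (h₁ x * h₂ x)) ^ 2) /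
        ((∫ x in Ioo 0 t, h₁ x) * (∫ x in Ioo 0 t, h₂ x)))
      (nhdsWithin 0 (Ioi 0)) (nhds 0) := by
  have hrv₃ : IsRegularlyVaryingAtZero (fun x => √(h₁ x * h₂ x)) α := by
    simpa using IsRegularlyVaryingAtZero.sqrt_mul hrv₁ hrv₂
      fun t ht => (mul_pos (hpos t ht).1 (hpos t ht).2).le
  have k₁ := IsRegularlyVaryingAtZero.tendsto_setIntegral_div_mul hrv₁ hα
    (fun t ht => (hpos t ht).1) (fun t ht => (hint t ht).1)
  have k₂ := IsRegularlyVaryingAtZero.tendsto_setIntegral_div_mul hrv₂ hα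
    (fun t ht => (hpos t ht).2) (fun t ht => (hint t ht).2.1)
  have k₃ := hrv₃.tendsto_setIntegral_div_mul hα
    (fun t ht => Real.sqrt_pos.2 (mul_pos (hpos t ht).1 (hpos t ht).2))
    (fun t ht => (hint t ht).2.2)
  have hne : (α + 1)⁻¹ ≠ 0 := inv_ne_zero (by linarith)
  have hlim := tendsto_const_nhds (x := (1 : ℝ)).sub
    ((k₃.pow 2).div (k₁.mul k₂) (mul_ne_zero hne hne))
  rw [sq, div_self (mul_ne_zero hne hne), sub_self] at hlim
  refine hlim.congr' ?_
  filter_upwards [self_mem_nhdsWithin, k₁.eventually_ne hne, k₂.eventually_ne hne]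
    with t ht h₁ne h₂ne
  have hm₁ := (div_ne_zero_iff.1 h₁ne).1
  have hm₂ := (div_ne_zero_iff.1 h₂ne).1
  have ht₀ : t ≠ 0 := ne_of_gt ht
  obtain ⟨hpos₁, hpos₂⟩ := hpos t ht
  have hsq : √(h₁ t * h₂ t) ^ 2 = h₁ t * h₂ t := sq_sqrt (mul_pos hpos₁ hpos₂).le
  simp only [Pi.div_apply, div_pow, mul_pow, hsq]
  field_simp
end

section
/- Let I₊ = ⋃_{k≥1} [t_{2k}, t_{2k−1}) and I₋ = ⋃_{k≥0} [t_{2k+1}, t_{2k}) where (t_n) is a strictly decreasing sequence of positive reals with t_{n+1}/t_n → 0 (t₀ = ∞). Let F(t) = (1/t)λ((0,t)∩I₊) · (1/t)λ((0,t)∩I₋). Then lim_{n→∞} F(t_n) = 0 but limsup_{t→0} F(t) ≥ 1/4. -/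
open MeasureTheory Set Filter

/-!
Both factors of `F` are densities in `(0, x)`, hence lie in `[0, 1]`. At `x = t_n` the set of
the opposite parity to the block `[t_{n+1}, t_n)` only meets `(0, t_{n+1})`, so one factor is at
most `t_{n+1}/t_n → 0`. At `x = 2 t_{2k}`, which lies in the `I₊`-block `[t_{2k}, t_{2k-1})` once
`t_{2k}/t_{2k-1} ≤ 1/2`, the `I₊`-factor is at least `1/2` (from `[t_{2k}, 2t_{2k})`) and the
`I₋`-factor at least `(1 - t_{2k+1}/t_{2k})/2` (from `[t_{2k+1}, t_{2k})`).
-/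

noncomputable def initialDensity (S : Set ℝ) (x : ℝ) : ℝ :=
  1 / x * (volume (Ioo 0 x ∩ S)).toReal

section initialDensity

variable {S : Set ℝ} {x : ℝ}

lemma initialDensity_nonneg (S : Set ℝ) (hx : 0 ≤ x) : 0 ≤ initialDensity S x := by
  unfold initialDensity
  positivity

lemma initialDensity_le_div {y : ℝ} (hx : 0 < x) (hy : 0 ≤ y) (h : Ioo 0 x ∩ S ⊆ Ioo 0 y) :
    initialDensity S x ≤ y / x := by
  have hvol : (volume (Ioo 0 x ∩ S)).toReal ≤ y := by
    simpa [Real.volume_Ioo, hy] using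
      ENNReal.toReal_mono (by simp [Real.volume_Ioo]) (measure_mono (μ := volume) h)
  rw [initialDensity, one_div_mul_eq_div]
  gcongr

lemma initialDensity_le_one (S : Set ℝ) (hx : 0 < x) : initialDensity S x ≤ 1 :=
  (initialDensity_le_div hx hx.le inter_subset_left).trans_eq (div_self hx.ne')

lemma div_le_initialDensity {a b : ℝ} (hx : 0 < x) (h : Ico a b ⊆ Ioo 0 x ∩ S) :
    (b - a) / x ≤ initialDensity S x := by
  have hfin : volume (Ioo 0 x ∩ S) ≠ ⊤ :=
    ne_top_of_le_ne_top (by simp [Real.volume_Ioo]) (measure_mono inter_subset_left)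
  have hvol : b - a ≤ (volume (Ioo 0 x ∩ S)).toReal := by
    have := ENNReal.toReal_mono hfin (measure_mono h)
    rw [Real.volume_Ico, ENNReal.toReal_ofReal'] at this
    exact (le_max_left _ _).trans this
  rw [initialDensity, one_div_mul_eq_div]
  gcongr

/-- Since both densities are at most `1`, it suffices to bound one of them. -/
lemma initialDensity_mul_le_div {P M : Set ℝ} {y : ℝ} (hx : 0 < x) (hy : 0 ≤ y)
    (h : Ioo 0 x ∩ P ⊆ Ioo 0 y ∨ Ioo 0 x ∩ M ⊆ Ioo 0 y) :
    initialDensity P x * initialDensity M x ≤ y / x := by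
  have hP0 := initialDensity_nonneg P hx.le
  have hM0 := initialDensity_nonneg M hx.le
  rcases h with hP | hM
  · calc initialDensity P x * initialDensity M x ≤ y / x * 1 :=
          mul_le_mul (initialDensity_le_div hx hy hP) (initialDensity_le_one M hx) hM0
            (by positivity)
      _ = y / x := mul_one _
  · calc initialDensity P x * initialDensity M x ≤ 1 * (y / x) :=
          mul_le_mul (initialDensity_le_one P hx) (initialDensity_le_div hx hy hM) hM0
            zero_le_one
      _ = y / x := one_mul _

end initialDensity

lemma tendsto_zero_of_tendsto_ratio_zero {t : ℕ → ℝ} (hpos : ∀ n, 0 < t n)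
    (hratio : Tendsto (fun n => t (n + 1) / t n) atTop (nhds 0)) :
    Tendsto t atTop (nhds 0) := by
  refine Summable.tendsto_atTop_zero (summable_of_ratio_test_tendsto_lt_one zero_lt_one
    (Eventually.of_forall fun n => (hpos n).ne') ?_)
  simpa only [Real.norm_of_nonneg (hpos _).le] using hratio

lemma eventually_two_mul_succ_le {t : ℕ → ℝ} (hpos : ∀ n, 0 < t n)
    (hratio : Tendsto (fun n => t (n + 1) / t n) atTop (nhds 0)) :
    ∀ᶠ n in atTop, 2 * t (n + 1) ≤ t n := by
  filter_upwards [hratio.eventually_le_const (by norm_num : (0 : ℝ) < 1 / 2)] with n hn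
  rw [div_le_iff₀ (hpos n)] at hn
  linarith

lemma le_limsup_of_tendsto_of_eventually_le {α : Type*} {l : Filter α} {F : α → ℝ}
    {u : ℕ → α} {g : ℕ → ℝ} {c : ℝ} (hu : Tendsto u atTop l) (hg : Tendsto g atTop (nhds c))
    (hgF : ∀ᶠ k in atTop, g k ≤ F (u k)) (hF : IsBoundedUnder (· ≤ ·) l F) :
    c ≤ limsup F l := by
  refine le_of_forall_sub_le fun ε hε => le_limsup_of_frequently_le ?_ hF
  refine hu.frequently (Eventually.frequently ?_)
  filter_upwards [hg.eventually_const_lt (sub_lt_self c hε), hgF] with k hk hkF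
  exact hk.le.trans hkF

lemma StrictAnti.lt_succ_of_mem_Ico {α : Type*} [LinearOrder α] {t : ℕ → α} (ht : StrictAnti t)
    {x : α} {m n : ℕ} (hx : x ∈ Ico (t (m + 1)) (t m)) (hxn : x < t n) (hmn : m ≠ n) :
    x < t (n + 1) := by
  have hnm : n < m + 1 := ht.lt_iff_gt.mp (hx.1.trans_lt hxn)
  exact hx.2.trans_le (ht.antitone (by omega))

/-- `I₊ = ⋃_{k≥1} [t_{2k}, t_{2k-1})`. -/
def plusBlocks (t : ℕ → ℝ) : Set ℝ := ⋃ k : ℕ, Ico (t (2 * k + 2)) (t (2 * k + 1))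

/-- `I₋ = ⋃_{k≥0} [t_{2k+1}, t_{2k})` with `t₀ = ∞`. -/
def minusBlocks (t : ℕ → ℝ) : Set ℝ := Ici (t 1) ∪ ⋃ k : ℕ, Ico (t (2 * k + 3)) (t (2 * k + 2))

section blocks

variable {t : ℕ → ℝ}

lemma Ioo_inter_plusBlocks_subset (ht : StrictAnti t) (k : ℕ) :
    Ioo 0 (t (2 * k + 2)) ∩ plusBlocks t ⊆ Ioo 0 (t (2 * k + 3)) := by
  rintro x ⟨⟨hx0, hx⟩, hxI⟩
  obtain ⟨j, hj⟩ := mem_iUnion.mp hxI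
  exact ⟨hx0, ht.lt_succ_of_mem_Ico (m := 2 * j + 1) hj hx (by omega)⟩

lemma Ioo_inter_minusBlocks_subset (ht : StrictAnti t) (k : ℕ) :
    Ioo 0 (t (2 * k + 1)) ∩ minusBlocks t ⊆ Ioo 0 (t (2 * k + 2)) := by
  rintro x ⟨⟨hx0, hx⟩, hxI | hxI⟩
  · exact absurd (hx.trans_le (ht.antitone (by omega))) (not_lt.mpr hxI)
  · obtain ⟨j, hj⟩ := mem_iUnion.mp hxI
    exact ⟨hx0, ht.lt_succ_of_mem_Ico (m := 2 * j + 2) hj hx (by omega)⟩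

lemma initialDensity_mul_le_ratio (ht : StrictAnti t) (hpos : ∀ n, 0 < t n) (n : ℕ) :
    initialDensity (plusBlocks t) (t (n + 1)) * initialDensity (minusBlocks t) (t (n + 1)) ≤
      t (n + 2) / t (n + 1) := by
  refine initialDensity_mul_le_div (hpos _) (hpos _).le ?_
  obtain ⟨k, rfl | rfl⟩ := Nat.even_or_odd' n
  · exact Or.inr (Ioo_inter_minusBlocks_subset ht k)
  · exact Or.inl (Ioo_inter_plusBlocks_subset ht k)

lemma quarter_mul_le_initialDensity_mul (ht : StrictAnti t) (hpos : ∀ n, 0 < t n) {k : ℕ}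
    (hk : 2 * t (2 * k + 2) ≤ t (2 * k + 1)) :
    1 / 4 * (1 - t (2 * k + 3) / t (2 * k + 2)) ≤
      initialDensity (plusBlocks t) (2 * t (2 * k + 2)) *
        initialDensity (minusBlocks t) (2 * t (2 * k + 2)) := by
  set a := t (2 * k + 2)
  set b := t (2 * k + 3)
  have ha : 0 < a := hpos _
  have hb : 0 < b := hpos _
  have hba : b < a := ht (by omega)
  have hplus : (2 * a - a) / (2 * a) ≤ initialDensity (plusBlocks t) (2 * a) :=
    div_le_initialDensity (by positivity) fun y hy =>
      ⟨⟨ha.trans_le hy.1, hy.2⟩, mem_iUnion.mpr ⟨k, hy.1, hy.2.trans_le hk⟩⟩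
  have hminus : (a - b) / (2 * a) ≤ initialDensity (minusBlocks t) (2 * a) :=
    div_le_initialDensity (by positivity) fun y hy =>
      ⟨⟨hb.trans_le hy.1, by linarith [hy.2]⟩, Or.inr (mem_iUnion.mpr ⟨k, hy⟩)⟩
  calc 1 / 4 * (1 - b / a) = (2 * a - a) / (2 * a) * ((a - b) / (2 * a)) := by
        field_simp
        ring
    _ ≤ _ := mul_le_mul hplus hminus (div_nonneg (by linarith) (by positivity))
        (initialDensity_nonneg _ (by positivity))

lemma tendsto_initialDensity_mul_at_seq (ht : StrictAnti t) (hpos : ∀ n, 0 < t n)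
    (hratio : Tendsto (fun n => t (n + 1) / t n) atTop (nhds 0)) :
    Tendsto (fun n => initialDensity (plusBlocks t) (t (n + 1)) *
      initialDensity (minusBlocks t) (t (n + 1))) atTop (nhds 0) :=
  squeeze_zero (fun _ => mul_nonneg (initialDensity_nonneg _ (hpos _).le)
      (initialDensity_nonneg _ (hpos _).le))
    (initialDensity_mul_le_ratio ht hpos) (hratio.comp (tendsto_add_atTop_nat 1))

lemma quarter_le_limsup_initialDensity_mul (ht : StrictAnti t) (hpos : ∀ n, 0 < t n)
    (hratio : Tendsto (fun n => t (n + 1) / t n) atTop (nhds 0)) :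
    1 / 4 ≤ limsup (fun x => initialDensity (plusBlocks t) x * initialDensity (minusBlocks t) x)
      (nhdsWithin 0 (Ioi 0)) := by
  have h2k : Tendsto (fun k : ℕ => 2 * k + 2) atTop atTop :=
    tendsto_atTop_mono (fun k => show k ≤ 2 * k + 2 by omega) tendsto_id
  have h2k1 : Tendsto (fun k : ℕ => 2 * k + 1) atTop atTop :=
    tendsto_atTop_mono (fun k => show k ≤ 2 * k + 1 by omega) tendsto_id
  have hratio2 : Tendsto (fun k : ℕ => t (2 * k + 3) / t (2 * k + 2)) atTop (nhds 0) :=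
    hratio.comp h2k
  refine le_limsup_of_tendsto_of_eventually_le (u := fun k => 2 * t (2 * k + 2))
    (g := fun k => 1 / 4 * (1 - t (2 * k + 3) / t (2 * k + 2))) ?_
    (by convert (hratio2.const_sub 1).const_mul (1 / 4); norm_num) ?_ ?_
  · refine tendsto_nhdsWithin_iff.mpr ⟨?_, Eventually.of_forall fun k => mul_pos two_pos (hpos _)⟩
    simpa using ((tendsto_zero_of_tendsto_ratio_zero hpos hratio).comp h2k).const_mul 2
  · filter_upwards [h2k1.eventually (eventually_two_mul_succ_le hpos hratio)] with k hk
    exact quarter_mul_le_initialDensity_mul ht hpos hk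
  · refine ⟨1, eventually_map.mpr (eventually_mem_nhdsWithin.mono fun x (hx : 0 < x) => ?_)⟩
    exact mul_le_one₀ (initialDensity_le_one _ hx) (initialDensity_nonneg _ hx.le)
      (initialDensity_le_one _ hx)

end blocks

/-- For a strictly decreasing positive sequence `(t_n)_{n≥1}` with `t_{n+1}/t_n → 0`
(and `t₀ = ∞`), setting `I₊ = ⋃_{k≥1}[t_{2k},t_{2k−1})`, `I₋ = ⋃_{k≥0}[t_{2k+1},t_{2k})`
and `F(t) = (1/t)λ((0,t)∩I₊)·(1/t)λ((0,t)∩I₋)`, one has `F(t_n) → 0` but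
`limsup_{t→0} F(t) ≥ 1/4`.  (Indices: `t n` denotes `t_n` for `n ≥ 1`; the `k = 0`
part of `I₋` is `[t₁, ∞)`.) -/
theorem stmt16 (t : ℕ → ℝ) (hdec : StrictAnti t) (hpos : ∀ n, 0 < t n)
    (hratio : Tendsto (fun n => t (n + 1) / t n) atTop (nhds 0))
    (Iplus Iminus : Set ℝ)
    (hIp : Iplus = ⋃ k : ℕ, Ico (t (2 * k + 2)) (t (2 * k + 1)))
    (hIm : Iminus = Ici (t 1) ∪ ⋃ k : ℕ, Ico (t (2 * k + 3)) (t (2 * k + 2)))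
    (F : ℝ → ℝ)
    (hF : ∀ x, F x = (1 / x * (volume (Ioo 0 x ∩ Iplus)).toReal) *
      (1 / x * (volume (Ioo 0 x ∩ Iminus)).toReal)) :
    Tendsto (fun n => F (t (n + 1))) atTop (nhds 0) ∧
      1 / 4 ≤ Filter.limsup F (nhdsWithin 0 (Ioi 0)) := by
  obtain rfl : Iplus = plusBlocks t := hIp
  obtain rfl : Iminus = minusBlocks t := hIm
  obtain rfl : F = fun x => initialDensity (plusBlocks t) x * initialDensity (minusBlocks t) x :=
    funext hF
  exact ⟨tendsto_initialDensity_mul_at_seq hdec hpos hratio,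
    quarter_le_limsup_initialDensity_mul hdec hpos hratio⟩
end

section
/- Let m₁, m₂ : (0,∞) → (0,∞) be continuous strictly increasing functions with m_i(t) → 0 as t → 0 and m₁(t)+m₂(t) → ∞ as t → ∞. For s, T > 0 let u(s) = s·τ_s^{-1}(T), where τ_s(t) = m₁(st)/m₁(s) + m₂(st)/m₂(s) is a homeomorphism of (0,∞) onto itself. Then u is continuous on (0,∞) and lim_{s→0} u(s) = 0. -/
open Set Filter

/-- If `u(s) = s·τ_s⁻¹(T)`, i.e. `m₁(u(s))/m₁(s) + m₂(u(s))/m₂(s) = T` with `u(s) > 0`,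
then `u` is continuous on `(0,∞)` and `u(s) → 0` as `s → 0`. -/
theorem stmt18 (m₁ m₂ : ℝ → ℝ)
    (hpos : ∀ t > (0:ℝ), 0 < m₁ t ∧ 0 < m₂ t)
    (hmono₁ : StrictMonoOn m₁ (Ioi 0)) (hmono₂ : StrictMonoOn m₂ (Ioi 0))
    (hcont₁ : ContinuousOn m₁ (Ioi 0)) (hcont₂ : ContinuousOn m₂ (Ioi 0))
    (h0₁ : Tendsto m₁ (nhdsWithin 0 (Ioi 0)) (nhds 0))
    (h0₂ : Tendsto m₂ (nhdsWithin 0 (Ioi 0)) (nhds 0))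
    (hinfty : Tendsto (fun t => m₁ t + m₂ t) atTop atTop)
    (T : ℝ) (hT : 0 < T) (u : ℝ → ℝ)
    (hu : ∀ s > (0:ℝ), 0 < u s ∧ m₁ (u s) / m₁ s + m₂ (u s) / m₂ s = T) :
    ContinuousOn u (Ioi 0) ∧ Tendsto u (nhdsWithin 0 (Ioi 0)) (nhds 0) := by
  -- monotonicity of x ↦ F s x
  have hFle : ∀ s > (0:ℝ), ∀ x > (0:ℝ), ∀ y > (0:ℝ), x ≤ y →
      m₁ x / m₁ s + m₂ x / m₂ s ≤ m₁ y / m₁ s + m₂ y / m₂ s := by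
    intro s hs x hx y hy hxy
    have h1 := hmono₁.monotoneOn (mem_Ioi.2 hx) (mem_Ioi.2 hy) hxy
    have h2 := hmono₂.monotoneOn (mem_Ioi.2 hx) (mem_Ioi.2 hy) hxy
    have := (hpos s hs).1
    have := (hpos s hs).2
    gcongr
  have hFlt : ∀ s > (0:ℝ), ∀ x > (0:ℝ), ∀ y > (0:ℝ), x < y →
      m₁ x / m₁ s + m₂ x / m₂ s < m₁ y / m₁ s + m₂ y / m₂ s := by
    intro s hs x hx y hy hxy
    have h1 := hmono₁ (mem_Ioi.2 hx) (mem_Ioi.2 hy) hxy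
    have h2 := hmono₂ (mem_Ioi.2 hx) (mem_Ioi.2 hy) hxy
    have := (hpos s hs).1
    have := (hpos s hs).2
    gcongr
  -- continuity in s of s ↦ F s a for fixed a
  have hFcont : ∀ a : ℝ, ContinuousOn (fun s => m₁ a / m₁ s + m₂ a / m₂ s) (Ioi 0) := by
    intro a
    exact (continuousOn_const.div hcont₁ fun s hs => (hpos s hs).1.ne').add
      (continuousOn_const.div hcont₂ fun s hs => (hpos s hs).2.ne')
  constructor
  · intro s₀ hs₀
    have hs₀' : (0:ℝ) < s₀ := hs₀
    obtain ⟨hu₀pos, hu₀eq⟩ := hu s₀ hs₀'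
    rw [ContinuousWithinAt]
    rw [tendsto_order]
    constructor
    · intro a ha
      rcases le_or_gt a 0 with h0 | h0
      · filter_upwards [self_mem_nhdsWithin] with s hs
        exact lt_of_le_of_lt h0 (hu s hs).1
      · have hlt : m₁ a / m₁ s₀ + m₂ a / m₂ s₀ < T := by
          rw [← hu₀eq]; exact hFlt s₀ hs₀' a h0 (u s₀) hu₀pos ha
        have hev := ((hFcont a) s₀ hs₀).eventually_lt_const hlt
        filter_upwards [hev, self_mem_nhdsWithin] with s hsF hs
        by_contra hcon
        push_neg at hcon
        obtain ⟨huspos, huseq⟩ := hu s hs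
        have := hFle s hs (u s) huspos a h0 hcon
        rw [huseq] at this
        linarith
    · intro b hb
      have hb0 : (0:ℝ) < b := lt_trans hu₀pos hb
      have hlt : T < m₁ b / m₁ s₀ + m₂ b / m₂ s₀ := by
        rw [← hu₀eq]; exact hFlt s₀ hs₀' (u s₀) hu₀pos b hb0 hb
      have hev := ((hFcont b) s₀ hs₀).eventually_const_lt hlt
      filter_upwards [hev, self_mem_nhdsWithin] with s hsF hs
      by_contra hcon
      push_neg at hcon
      obtain ⟨huspos, huseq⟩ := hu s hs
      have := hFle s hs b hb0 (u s) huspos hcon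
      rw [huseq] at this
      linarith
  · rw [tendsto_order]
    constructor
    · intro a ha
      filter_upwards [self_mem_nhdsWithin] with s hs
      exact lt_trans ha (hu s hs).1
    · intro b hb
      have hmb : 0 < m₁ b := (hpos b hb).1
      have hev := h0₁.eventually_lt_const (show (0:ℝ) < m₁ b / T by positivity)
      filter_upwards [hev, self_mem_nhdsWithin] with s hsm hs
      by_contra hcon
      push_neg at hcon
      obtain ⟨huspos, huseq⟩ := hu s hs
      have hm1s := (hpos s hs).1
      have hm2s := (hpos s hs).2
      have hm2u := (hpos (u s) huspos).2
      have h1 : m₁ b ≤ m₁ (u s) := hmono₁.monotoneOn (mem_Ioi.2 hb) (mem_Ioi.2 huspos) hcon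
      have h2 : m₁ b / m₁ s < T := by
        have hpos2 : m₂ (u s) / m₂ s > 0 := by positivity
        calc m₁ b / m₁ s ≤ m₁ (u s) / m₁ s := by gcongr
          _ < m₁ (u s) / m₁ s + m₂ (u s) / m₂ s := by linarith [hpos2]
          _ = T := huseq
      have h3 : m₁ b < T * m₁ s := (div_lt_iff₀ hm1s).1 h2
      have h4 : T * m₁ s < m₁ b := by
        have := (lt_div_iff₀ hT).1 hsm
        linarith
      linarith
end
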